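/- arXiv:1505.01149 — 9 statements merged into one kernel-verified Lean document; each statement's English description precedes it below -/
import Mathlib

section
/- Let n ≥ 2 and let M_1, …, M_m ∈ V. If there exists a nonzero Z ∈ V with Z M_j = M_j Z for all j = 1, …, m, then there exists a nonzero Z' ∈ V having exactly two distinct eigenvalues such that Z' M_j = M_j Z' for all j = 1, …, m. (In other words, if the common commutant of the M_j in V is nonzero, it contains a maximally singular element, i.e., one whose annihilating root system has co-rank one in A_{n−1}.) -/
/-!
A nonzero traceless symmetric matrix `Z` is not scalar, so it has two distinct eigenvalues
`x ≠ y`. The orthogonal projection `P` onto the `x`-eigenspace is a function of `Z` in the sense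
of the functional calculus, hence commutes with everything that commutes with `Z`, and its
spectrum is `{1, 0}`. Its traceless part `P - (tr P / n) • 1` is then a symmetric traceless
matrix in the same commutant whose spectrum is the translate `{1 - tr P / n, - tr P / n}`.
-/

open Matrix Pointwise

theorem ne_zero_of_spectrum_eq_pair {𝕜 A : Type*} [Field 𝕜] [Ring A] [Algebra 𝕜 A]
    [Nontrivial A] {a : A} {r s : 𝕜} (hrs : r ≠ s) (h : spectrum 𝕜 a = {r, s}) : a ≠ 0 := by
  rintro rfl
  rw [spectrum.zero_eq] at h
  have hr : r ∈ ({0} : Set 𝕜) := h ▸ Set.mem_insert _ _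
  have hs : s ∈ ({0} : Set 𝕜) := h ▸ Set.mem_insert_of_mem _ rfl
  exact hrs (hr.trans hs.symm)

namespace Matrix

variable {ι : Type*} [Fintype ι] [DecidableEq ι]

theorem trace_algebraMap {R : Type*} [CommSemiring R] (r : R) :
    trace (algebraMap R (Matrix ι ι R) r) = Fintype.card ι * r := by
  simp [Algebra.algebraMap_eq_smul_one, mul_comm]

theorem exists_ne_mem_spectrum_of_trace_eq_zero {A : Matrix ι ι ℝ} (hA : IsSelfAdjoint A)
    (htr : A.trace = 0) (hA0 : A ≠ 0) : ∃ x ∈ spectrum ℝ A, ∃ y ∈ spectrum ℝ A, x ≠ y := by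
  have : Nonempty ι := by
    by_contra h
    rw [not_nonempty_iff] at h
    exact hA0 (Subsingleton.elim _ _)
  obtain ⟨x, hx⟩ := ContinuousFunctionalCalculus.spectrum_nonempty (R := ℝ) A hA
  refine ⟨x, hx, ?_⟩
  by_contra! hscalar
  have hAx : A = algebraMap ℝ _ x :=
    CFC.eq_algebraMap_of_spectrum_subset_singleton A x fun y hy => (hscalar y hy).symm
  rw [hAx, trace_algebraMap] at htr
  have hx0 : x = 0 := by simpa using htr
  simp [hAx, hx0] at hA0

noncomputable def spectralProjection (A : Matrix ι ι ℝ) (x : ℝ) : Matrix ι ι ℝ :=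
  cfc (fun t => if t = x then (1 : ℝ) else 0) A

theorem isSelfAdjoint_spectralProjection (A : Matrix ι ι ℝ) (x : ℝ) :
    IsSelfAdjoint (spectralProjection A x) :=
  cfc_predicate _ A

theorem _root_.Commute.spectralProjection {A B : Matrix ι ι ℝ} (h : Commute A B) (x : ℝ) :
    Commute (spectralProjection A x) B :=
  h.cfc_real _

theorem spectrum_spectralProjection {A : Matrix ι ι ℝ} (hA : IsSelfAdjoint A) {x y : ℝ}
    (hx : x ∈ spectrum ℝ A) (hy : y ∈ spectrum ℝ A) (hxy : x ≠ y) :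
    spectrum ℝ (spectralProjection A x) = {1, 0} := by
  rw [spectralProjection, cfc_map_spectrum _ A hA (A.finite_real_spectrum.continuousOn _)]
  refine Set.Subset.antisymm ?_ ?_
  · rintro _ ⟨t, -, rfl⟩
    dsimp only
    split_ifs <;> simp
  · rintro _ (rfl | rfl)
    · exact ⟨x, hx, if_pos rfl⟩
    · exact ⟨y, hy, if_neg hxy.symm⟩

section tracelessPart

variable {𝕜 : Type*} [Field 𝕜]

noncomputable def tracelessPart (A : Matrix ι ι 𝕜) : Matrix ι ι 𝕜 :=
  A - algebraMap 𝕜 _ (A.trace / Fintype.card ι)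

theorem trace_tracelessPart [CharZero 𝕜] [Nonempty ι] (A : Matrix ι ι 𝕜) :
    A.tracelessPart.trace = 0 := by
  rw [tracelessPart, trace_sub, trace_algebraMap]
  field_simp
  ring

theorem _root_.Commute.tracelessPart {A B : Matrix ι ι 𝕜} (h : Commute A B) :
    Commute A.tracelessPart B :=
  h.sub_left (Algebra.commute_algebraMap_left _ _)

theorem spectrum_tracelessPart (A : Matrix ι ι 𝕜) :
    spectrum 𝕜 A.tracelessPart = spectrum 𝕜 A - ({A.trace / Fintype.card ι} : Set 𝕜) :=
  (spectrum.sub_singleton_eq _ _).symm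

theorem isSelfAdjoint_tracelessPart {A : Matrix ι ι ℝ} (hA : IsSelfAdjoint A) :
    IsSelfAdjoint A.tracelessPart :=
  hA.sub (.algebraMap _ (.all _))

end tracelessPart

end Matrix

theorem common_commutant_contains_maximally_singular_general
    (n : ℕ) (m : ℕ)
    (M : Fin m → Matrix (Fin n) (Fin n) ℝ)
    (Z : Matrix (Fin n) (Fin n) ℝ)
    (hZsymm : Z.IsSymm) (hZtrace : Z.trace = 0) (hZne : Z ≠ 0)
    (hZcomm : ∀ j, Z * M j = M j * Z) :
    ∃ Z' : Matrix (Fin n) (Fin n) ℝ,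
      Z'.IsSymm ∧ Z'.trace = 0 ∧ Z' ≠ 0 ∧
      (∃ a b : ℝ, a ≠ b ∧ spectrum ℝ Z' = {a, b}) ∧
      ∀ j, Z' * M j = M j * Z' := by
  have hZ : IsSelfAdjoint Z := isHermitian_iff_isSymm.mpr hZsymm
  have : NeZero n := ⟨by rintro rfl; exact hZne (Subsingleton.elim _ _)⟩
  obtain ⟨x, hx, y, hy, hxy⟩ := exists_ne_mem_spectrum_of_trace_eq_zero hZ hZtrace hZne
  set P := spectralProjection Z x
  set c := P.trace / Fintype.card (Fin n)
  have hspec : spectrum ℝ P.tracelessPart = {1 - c, -c} := by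
    rw [spectrum_tracelessPart, spectrum_spectralProjection hZ hx hy hxy]
    simp [Set.image_pair, c]
  have hc : 1 - c ≠ -c := by simp
  refine ⟨P.tracelessPart, ?_, trace_tracelessPart P, ne_zero_of_spectrum_eq_pair hc hspec,
    ⟨1 - c, -c, hc, hspec⟩, fun j => ?_⟩
  · exact isHermitian_iff_isSymm.mp
      (isSelfAdjoint_tracelessPart (isSelfAdjoint_spectralProjection Z x))
  · exact ((Commute.spectralProjection (hZcomm j) x).tracelessPart).eq

theorem common_commutant_contains_maximally_singular
    (n : ℕ) (hn : 2 ≤ n) (m : ℕ)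
    (M : Fin m → Matrix (Fin n) (Fin n) ℝ)
    (hM : ∀ j, (M j).IsSymm ∧ (M j).trace = 0)
    (Z : Matrix (Fin n) (Fin n) ℝ)
    (hZsymm : Z.IsSymm) (hZtrace : Z.trace = 0) (hZne : Z ≠ 0)
    (hZcomm : ∀ j, Z * M j = M j * Z) :
    ∃ Z' : Matrix (Fin n) (Fin n) ℝ,
      Z'.IsSymm ∧ Z'.trace = 0 ∧ Z' ≠ 0 ∧
      (∃ a b : ℝ, a ≠ b ∧ spectrum ℝ Z' = {a, b}) ∧
      ∀ j, Z' * M j = M j * Z' :=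
  common_commutant_contains_maximally_singular_general n m M Z hZsymm hZtrace hZne hZcomm
end

section
/- Let n ≥ 1, L ≥ 1, let X_1, …, X_L be n×n real symmetric matrices, and let α_1, …, α_L ∈ ℝ with m_j = dim ker(X_j − α_j I). If m_1 + ⋯ + m_L ≥ (L−1)·n + 1, then for every choice of k_1, …, k_L ∈ O(n), the number α_1 + ⋯ + α_L is an eigenvalue of k_1 X_1 k_1ᵀ + ⋯ + k_L X_L k_Lᵀ, i.e., ker(k_1 X_1 k_1ᵀ + ⋯ + k_L X_L k_Lᵀ − (α_1 + ⋯ + α_L) I) ≠ {0}. -/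
/-! Conjugating `X i - α i • 1` by the orthogonal `k i` preserves the dimension of its kernel, so the
kernels `V i` of `k i * X i * (k i)ᵀ - α i • 1` have dimensions `m i` with `∑ m i ≥ (L - 1) n + 1`.
Codimension is subadditive under intersection, hence `⋂ V i` has codimension at most
`∑ (n - m i) ≤ n - 1`, so it contains a nonzero vector, and every vector of `⋂ V i` lies in the
kernel of `∑ i, (k i * X i * (k i)ᵀ - α i • 1)`. -/

open Matrix

theorem Submodule.sum_finrank_add_finrank_le_card_mul_finrank_add_finrank_biInf {K V ι : Type*}
    [DivisionRing K] [AddCommGroup V] [Module K V] [FiniteDimensional K V]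
    (S : ι → Submodule K V) (s : Finset ι) :
    (∑ i ∈ s, Module.finrank K (S i)) + Module.finrank K V ≤
      s.card * Module.finrank K V + Module.finrank K ↥(⨅ i ∈ s, S i) := by
  classical
  induction s using Finset.induction_on with
  | empty => rw [show (⨅ i ∈ (∅ : Finset ι), S i) = ⊤ by simp]; simp
  | insert a s ha ih =>
    rw [Finset.sum_insert ha, Finset.card_insert_of_notMem ha, Finset.iInf_insert, add_one_mul]
    have hsup_inf := Submodule.finrank_sup_add_finrank_inf_eq (S a) (⨅ i ∈ s, S i)
    have hsup_le := Submodule.finrank_le (S a ⊔ ⨅ i ∈ s, S i)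
    omega

theorem LinearMap.biInf_ker_le_ker_sum {R M N ι : Type*} [Semiring R] [AddCommMonoid M]
    [AddCommMonoid N] [Module R M] [Module R N] (f : ι → M →ₗ[R] N) (s : Finset ι) :
    ⨅ i ∈ s, LinearMap.ker (f i) ≤ LinearMap.ker (∑ i ∈ s, f i) := fun v hv => by
  simp only [Submodule.mem_iInf, LinearMap.mem_ker] at hv
  rw [LinearMap.mem_ker, LinearMap.sum_apply]
  exact Finset.sum_eq_zero hv

namespace Matrix

variable {n K : Type*} [Fintype n] [Field K]

theorem rank_add_finrank_ker_mulVecLin (A : Matrix n n K) :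
    A.rank + Module.finrank K (LinearMap.ker A.mulVecLin) = Fintype.card n := by
  rw [rank, LinearMap.finrank_range_add_finrank_ker, Module.finrank_fintype_fun_eq_card]

variable [DecidableEq n]

theorem finrank_ker_mulVecLin_conj_transpose {k : Matrix n n K} (hk : kᵀ * k = 1)
    (A : Matrix n n K) :
    Module.finrank K (LinearMap.ker (k * A * kᵀ).mulVecLin) =
      Module.finrank K (LinearMap.ker A.mulVecLin) := by
  have hrank : (k * A * kᵀ).rank = A.rank := by
    rw [rank_mul_eq_left_of_isUnit_det _ _ (isUnit_det_of_right_inverse hk),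
      rank_mul_eq_right_of_isUnit_det _ _ (isUnit_det_of_left_inverse hk)]
  have hconj := rank_add_finrank_ker_mulVecLin (k * A * kᵀ)
  have hA := rank_add_finrank_ker_mulVecLin A
  omega

theorem mul_sub_smul_one_mul_transpose {k : Matrix n n K} (hk : kᵀ * k = 1) (X : Matrix n n K)
    (a : K) : k * (X - a • 1) * kᵀ = k * X * kᵀ - a • 1 := by
  rw [Matrix.mul_sub, Matrix.sub_mul, Matrix.mul_smul, Matrix.mul_one, Matrix.smul_mul,
    mul_eq_one_comm.mp hk]

end Matrix

theorem eigenvalue_of_sum_of_conjugates_general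
    (n : ℕ) (L : ℕ)
    (X : Fin L → Matrix (Fin n) (Fin n) ℝ)
    (α : Fin L → ℝ)
    (hsum : (L - 1) * n + 1 ≤
      ∑ i, Module.finrank ℝ (LinearMap.ker (X i - α i • 1).mulVecLin))
    (k : Fin L → Matrix (Fin n) (Fin n) ℝ) (hk : ∀ i, (k i)ᵀ * k i = 1) :
    LinearMap.ker ((∑ i, k i * X i * (k i)ᵀ) - (∑ i, α i) • 1).mulVecLin ≠ ⊥ := by
  have hdim (i : Fin L) :
      Module.finrank ℝ (LinearMap.ker (k i * X i * (k i)ᵀ - α i • 1).mulVecLin) =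
        Module.finrank ℝ (LinearMap.ker (X i - α i • 1).mulVecLin) := by
    rw [← mul_sub_smul_one_mul_transpose (hk i), finrank_ker_mulVecLin_conj_transpose (hk i)]
  have hbound := Submodule.sum_finrank_add_finrank_le_card_mul_finrank_add_finrank_biInf
    (fun i => LinearMap.ker (k i * X i * (k i)ᵀ - α i • 1).mulVecLin) Finset.univ
  simp only [hdim, Finset.card_univ, Fintype.card_fin, Module.finrank_fin_fun] at hbound
  have hcommon :
      (⨅ i ∈ Finset.univ, LinearMap.ker (k i * X i * (k i)ᵀ - α i • 1).mulVecLin) ≠ ⊥ := by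
    rw [Nat.sub_one_mul] at hsum
    rw [Ne, ← Submodule.finrank_eq_zero]
    omega
  rw [Finset.sum_smul, ← Finset.sum_sub_distrib, ← toLin'_apply', map_sum]
  refine ne_bot_of_le_ne_bot hcommon ?_
  simpa only [toLin'_apply'] using LinearMap.biInf_ker_le_ker_sum _ Finset.univ

theorem eigenvalue_of_sum_of_conjugates
    (n : ℕ) (hn : 1 ≤ n) (L : ℕ) (hL : 1 ≤ L)
    (X : Fin L → Matrix (Fin n) (Fin n) ℝ) (hX : ∀ i, (X i).IsSymm)
    (α : Fin L → ℝ)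
    (hsum : (L - 1) * n + 1 ≤
      ∑ i, Module.finrank ℝ (LinearMap.ker (X i - α i • 1).mulVecLin))
    (k : Fin L → Matrix (Fin n) (Fin n) ℝ) (hk : ∀ i, (k i)ᵀ * k i = 1) :
    LinearMap.ker ((∑ i, k i * X i * (k i)ᵀ) - (∑ i, α i) • 1).mulVecLin ≠ ⊥ :=
  eigenvalue_of_sum_of_conjugates_general n L X α hsum k hk
end

section
/- Let 3 ≤ p < q be integers and let X_1, …, X_{p−1} ∈ M_{p×q}(ℝ) each have matrix rank exactly 1. Then the sum of orbits O_{X_1} + ⋯ + O_{X_{p−1}} = {u_1 X_1 v_1ᵀ + ⋯ + u_{p−1} X_{p−1} v_{p−1}ᵀ : u_i ∈ O(p), v_i ∈ O(q)} has empty interior in M_{p×q}(ℝ). (These are the (p−1)-tuples of type B_{p−1}, showing the sharpness of the preceding p-fold result.) -/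
/- STATEMENT 11: Fix 3 ≤ p < q and X_1, …, X_{p−1} ∈ M_{p×q}(ℝ) each of matrix rank
exactly 1. Then O_{X_1} + ⋯ + O_{X_{p−1}} has empty interior in M_{p×q}(ℝ). -/

open Matrix

lemma myRankAddLe {m n : Type*} [Fintype m] [Fintype n]
    (A B : Matrix m n ℝ) : (A + B).rank ≤ A.rank + B.rank := by
  rw [Matrix.rank, Matrix.rank, Matrix.rank, Matrix.mulVecLin_add]
  have h : LinearMap.range (A.mulVecLin + B.mulVecLin) ≤
      LinearMap.range A.mulVecLin ⊔ LinearMap.range B.mulVecLin := by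
    rintro x ⟨y, rfl⟩
    exact Submodule.add_mem_sup ⟨y, rfl⟩ ⟨y, rfl⟩
  exact (Submodule.finrank_mono h).trans
    (Submodule.finrank_add_le_finrank_add_finrank _ _)

lemma myRankSumLe {m n ι : Type*} [Fintype m] [Fintype n]
    (s : Finset ι) (f : ι → Matrix m n ℝ) :
    (∑ i ∈ s, f i).rank ≤ ∑ i ∈ s, (f i).rank := by
  classical
  induction s using Finset.induction with
  | empty => simp
  | insert _ _ h ih =>
    rw [Finset.sum_insert h, Finset.sum_insert h]
    exact (myRankAddLe _ _).trans (add_le_add_right ih _)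

lemma myEvalCharpoly (p : ℕ) (B : Matrix (Fin p) (Fin p) ℝ) (t : ℝ) :
    Polynomial.eval t (Matrix.charpoly (-B)) =
      Matrix.det (t • (1 : Matrix (Fin p) (Fin p) ℝ) + B) := by
  rw [Matrix.charpoly, ← Polynomial.coe_evalRingHom, RingHom.map_det]
  congr 1
  ext i j
  by_cases h : i = j <;>
    simp [h, charmatrix_apply, Matrix.one_apply, Matrix.diagonal_apply, Matrix.smul_apply,
      Matrix.add_apply]

theorem orbitSum_rank_one_empty_interior_BDI
    (p q : ℕ) (hp : 3 ≤ p) (hpq : p < q)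
    (X : Fin (p - 1) → Matrix (Fin p) (Fin q) ℝ) (hX : ∀ i, (X i).rank = 1) :
    interior {Y : Matrix (Fin p) (Fin q) ℝ |
        ∃ (u : Fin (p - 1) → Matrix (Fin p) (Fin p) ℝ)
          (v : Fin (p - 1) → Matrix (Fin q) (Fin q) ℝ),
          (∀ i, (u i)ᵀ * u i = 1) ∧ (∀ i, (v i)ᵀ * v i = 1) ∧
          Y = ∑ i, u i * X i * (v i)ᵀ} = ∅ := by
  set S : Set (Matrix (Fin p) (Fin q) ℝ) :=
    {Y : Matrix (Fin p) (Fin q) ℝ |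
        ∃ (u : Fin (p - 1) → Matrix (Fin p) (Fin p) ℝ)
          (v : Fin (p - 1) → Matrix (Fin q) (Fin q) ℝ),
          (∀ i, (u i)ᵀ * u i = 1) ∧ (∀ i, (v i)ᵀ * v i = 1) ∧
          Y = ∑ i, u i * X i * (v i)ᵀ} with hS
  -- every element of S has rank ≤ p - 1
  have hrank : ∀ Z ∈ S, Z.rank ≤ p - 1 := by
    rintro Z ⟨u, v, hu, hv, rfl⟩
    calc (∑ i, u i * X i * (v i)ᵀ).rank ≤ ∑ i : Fin (p-1), (u i * X i * (v i)ᵀ).rank :=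
          myRankSumLe _ _
      _ ≤ ∑ _i : Fin (p-1), 1 := by
          refine Finset.sum_le_sum fun i _ => ?_
          calc (u i * X i * (v i)ᵀ).rank ≤ (u i * X i).rank := Matrix.rank_mul_le_left _ _
            _ ≤ (X i).rank := Matrix.rank_mul_le_right _ _
            _ = 1 := hX i
      _ = p - 1 := by simp
  rw [Set.eq_empty_iff_forall_notMem]
  intro Y hY
  -- the selection matrices
  set G : Matrix (Fin p) (Fin q) ℝ :=
    Matrix.of fun (i : Fin p) (j : Fin q) => if j = Fin.castLE hpq.le i then (1:ℝ) else 0 with hG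
  set P : Matrix (Fin q) (Fin p) ℝ :=
    Matrix.of fun (j : Fin q) (i : Fin p) => if j = Fin.castLE hpq.le i then (1:ℝ) else 0 with hP
  have hGP : G * P = 1 := by
    ext i k
    simp only [Matrix.mul_apply, Matrix.one_apply, Matrix.of_apply, ite_mul, one_mul, zero_mul,
      hG, hP]
    rw [Finset.sum_ite_eq' Finset.univ (Fin.castLE hpq.le i)]
    simp [Fin.castLE_inj, eq_comm]
  -- the line t ↦ Y + t • G
  have hφ : Continuous fun t : ℝ => Y + t • G := continuous_const.add (continuous_id.smul continuous_const)
  have hmem : (fun t : ℝ => Y + t • G) 0 ∈ interior S := by simpa using hY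
  have hU : (fun t : ℝ => Y + t • G) ⁻¹' interior S ∈ nhds (0:ℝ) :=
    (isOpen_interior.preimage hφ).mem_nhds hmem
  obtain ⟨l, r, ⟨hl, hr⟩, hsub⟩ := mem_nhds_iff_exists_Ioo_subset.mp hU
  -- the characteristic polynomial of -(Y * P) has finitely many roots
  have hne : Matrix.charpoly (-(Y * P)) ≠ 0 := (Matrix.charpoly_monic _).ne_zero
  have hfin : {t : ℝ | (Matrix.charpoly (-(Y * P))).IsRoot t}.Finite :=
    Polynomial.finite_setOf_isRoot hne
  have hinf : (Set.Ioo l r).Infinite := Set.Ioo_infinite (hl.trans hr)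
  obtain ⟨t, ht, hroot⟩ := (hinf.diff hfin).nonempty
  have hdet : ((Y + t • G) * P).det ≠ 0 := by
    have : (Y + t • G) * P = t • (1 : Matrix (Fin p) (Fin p) ℝ) + Y * P := by
      rw [Matrix.add_mul, Matrix.smul_mul, hGP, add_comm]
    rw [this, ← myEvalCharpoly]
    exact hroot
  have hfull : ((Y + t • G) * P).rank = p := by
    rw [Matrix.rank_of_isUnit _ ((Matrix.isUnit_iff_isUnit_det _).mpr
      (isUnit_iff_ne_zero.mpr hdet)), Fintype.card_fin]
  have hle : ((Y + t • G) * P).rank ≤ (Y + t • G).rank := Matrix.rank_mul_le_left _ _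
  have hZ : (Y + t • G).rank ≤ p - 1 :=
    hrank _ (interior_subset (hsub ht))
  omega
end

section
/- Let p ≥ 1 and let a, b be nonzero real numbers. Then the set {a·U + b·V : U, V ∈ U(p)} has nonempty interior in M_p(ℂ). (This is the pair (SU(p),SU(p)) in the symmetric space SU(p,p)/S(U(p)×U(p)), whose restricted root system is of type C_p: the orbit of the element a·I under the K-action is a·U(p).) -/
open Matrix

section Aux

lemma unit_circle_elt (α β : ℝ) (h : α^2 + β^2 = 1) :
    star ((α:ℂ) + (β:ℂ) * Complex.I) * ((α:ℂ) + (β:ℂ) * Complex.I) = 1 := by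
  rw [Complex.star_def, ← Complex.normSq_eq_conj_mul_self, Complex.normSq_add_mul_I, h,
    Complex.ofReal_one]

lemma scalar_decomp (a b d : ℝ) (ha : a ≠ 0) (hb : b ≠ 0)
    (h1 : |(|a| - |b|)| < d) (h2 : d < |a| + |b|) :
    ∃ u v : ℂ, star u * u = 1 ∧ star v * v = 1 ∧ (a : ℂ) * u + (b : ℂ) * v = (d : ℂ) := by
  set A := |a| with hAdef
  set B := |b| with hBdef
  have hA : 0 < A := abs_pos.2 ha
  have hB : 0 < B := abs_pos.2 hb
  have hd : 0 < d := lt_of_le_of_lt (abs_nonneg _) h1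
  have e1 : d - A < B := by linarith
  have e2 : A - d < B := by
    have : A - B ≤ |A - B| := le_abs_self _
    linarith
  have e3 : d - B < A := by linarith
  have e4 : B - d < A := by
    have : -(A - B) ≤ |A - B| := neg_le_abs _
    linarith
  set x := (d^2 + A^2 - B^2) / (2*d*A) with hxdef
  set y := (d^2 + B^2 - A^2) / (2*d*B) with hydef
  have hx2 : x^2 ≤ 1 := by
    rw [hxdef, div_pow, div_le_one (by positivity)]
    have f1 : (0:ℝ) < B^2 - (d-A)^2 := by nlinarith
    have f2 : (0:ℝ) < (d+A)^2 - B^2 := by nlinarith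
    nlinarith [mul_pos f1 f2]
  have hy2 : y^2 ≤ 1 := by
    rw [hydef, div_pow, div_le_one (by positivity)]
    have f1 : (0:ℝ) < A^2 - (d-B)^2 := by nlinarith
    have f2 : (0:ℝ) < (d+B)^2 - A^2 := by nlinarith
    nlinarith [mul_pos f1 f2]
  set s := Real.sqrt (1 - x^2) with hsdef
  set t := Real.sqrt (1 - y^2) with htdef
  have hs0 : 0 ≤ s := Real.sqrt_nonneg _
  have ht0 : 0 ≤ t := Real.sqrt_nonneg _
  have hs : s^2 = 1 - x^2 := Real.sq_sqrt (by linarith)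
  have ht : t^2 = 1 - y^2 := Real.sq_sqrt (by linarith)
  have hre : A*x + B*y = d := by
    rw [hxdef, hydef]; field_simp; ring
  have hsq : (A*s)^2 = (B*t)^2 := by
    rw [mul_pow, mul_pow, hs, ht, hxdef, hydef]
    field_simp; ring
  have him : A*s = B*t := by
    have h' : |A*s| = |B*t| := by
      rw [← Real.sqrt_sq_eq_abs, ← Real.sqrt_sq_eq_abs, hsq]
    rwa [abs_of_nonneg (by positivity), abs_of_nonneg (by positivity)] at h'
  set u₀ : ℂ := (x : ℂ) + (s : ℂ) * Complex.I with hu0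
  set v₀ : ℂ := (y : ℂ) + (-t : ℝ) * Complex.I with hv0
  have hu0u : star u₀ * u₀ = 1 := unit_circle_elt x s (by linarith)
  have hv0v : star v₀ * v₀ = 1 := unit_circle_elt y (-t) (by rw [neg_pow]; norm_num; linarith)
  have hsum : (A:ℂ) * u₀ + (B:ℂ) * v₀ = (d:ℂ) := by
    have : (A:ℂ) * u₀ + (B:ℂ) * v₀
        = ((A*x + B*y : ℝ) : ℂ) + ((A*s - B*t : ℝ) : ℂ) * Complex.I := by
      rw [hu0, hv0]; push_cast; ring
    rw [this, hre, him]
    simp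
  have hcu : ((a/A : ℝ) : ℂ) * ((a/A : ℝ) : ℂ) = 1 := by
    rw [← Complex.ofReal_mul]
    norm_cast
    rw [hAdef, div_mul_div_comm, abs_mul_abs_self, div_self (mul_ne_zero ha ha)]
  have hcv : ((b/B : ℝ) : ℂ) * ((b/B : ℝ) : ℂ) = 1 := by
    rw [← Complex.ofReal_mul]
    norm_cast
    rw [hBdef, div_mul_div_comm, abs_mul_abs_self, div_self (mul_ne_zero hb hb)]
  refine ⟨((a/A : ℝ) : ℂ) * u₀, ((b/B : ℝ) : ℂ) * v₀, ?_, ?_, ?_⟩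
  · calc star (((a/A : ℝ) : ℂ) * u₀) * (((a/A : ℝ) : ℂ) * u₀)
        = (((a/A : ℝ) : ℂ) * ((a/A : ℝ) : ℂ)) * (star u₀ * u₀) := by
          rw [star_mul', Complex.star_def, Complex.conj_ofReal]; ring
      _ = 1 := by rw [hcu, hu0u, one_mul]
  · calc star (((b/B : ℝ) : ℂ) * v₀) * (((b/B : ℝ) : ℂ) * v₀)
        = (((b/B : ℝ) : ℂ) * ((b/B : ℝ) : ℂ)) * (star v₀ * v₀) := by
          rw [star_mul', Complex.star_def, Complex.conj_ofReal]; ring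
      _ = 1 := by rw [hcv, hv0v, one_mul]
  · have ha' : a * (a/A) = A := by
      rw [hAdef, mul_div_assoc', ← abs_mul_abs_self, mul_div_assoc, div_self (ne_of_gt (abs_pos.2 ha)), mul_one]
    have hb' : b * (b/B) = B := by
      rw [hBdef, mul_div_assoc', ← abs_mul_abs_self, mul_div_assoc, div_self (ne_of_gt (abs_pos.2 hb)), mul_one]
    calc (a:ℂ) * (((a/A : ℝ) : ℂ) * u₀) + (b:ℂ) * (((b/B : ℝ) : ℂ) * v₀)
        = ((a * (a/A) : ℝ) : ℂ) * u₀ + ((b * (b/B) : ℝ) : ℂ) * v₀ := by push_cast; ring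
      _ = (A:ℂ) * u₀ + (B:ℂ) * v₀ := by rw [ha', hb']
      _ = (d:ℂ) := hsum


lemma key_mul {n : Type*} [Fintype n] [DecidableEq n] (Q : Matrix n n ℂ)
    (hQ : Qᴴ * Q = 1) (f g : n → ℂ) :
    (Q * diagonal f * Qᴴ) * (Q * diagonal g * Qᴴ) = Q * diagonal (fun i => f i * g i) * Qᴴ := by
  have h1 : (Q * diagonal f * Qᴴ) * (Q * diagonal g * Qᴴ)
      = Q * diagonal f * (Qᴴ * Q) * (diagonal g * Qᴴ) := by
    simp only [Matrix.mul_assoc]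
  rw [h1, hQ, Matrix.mul_one, Matrix.mul_assoc Q (diagonal f), ← Matrix.mul_assoc (diagonal f),
    Matrix.diagonal_mul_diagonal, ← Matrix.mul_assoc]

lemma conj_sandwich {n : Type*} [Fintype n] [DecidableEq n] (Q : Matrix n n ℂ) (f : n → ℂ) :
    (Q * diagonal f * Qᴴ)ᴴ = Q * diagonal (fun i => star (f i)) * Qᴴ := by
  rw [Matrix.conjTranspose_mul, Matrix.conjTranspose_mul, Matrix.conjTranspose_conjTranspose,
    Matrix.diagonal_conjTranspose, Matrix.mul_assoc]
  rfl

lemma euclidean_norm_le {p : ℕ} (y : Fin p → ℂ) (K : ℝ) (hK : 0 ≤ K)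
    (h : ∀ i, ‖y i‖ ≤ K) : ‖(WithLp.equiv 2 (Fin p → ℂ)).symm y‖ ≤ K * Real.sqrt p := by
  rw [EuclideanSpace.norm_eq]
  have h1 : ∑ i, ‖((WithLp.equiv 2 (Fin p → ℂ)).symm y) i‖ ^ 2 ≤ ∑ _i : Fin p, K^2 := by
    apply Finset.sum_le_sum
    intro i _
    have : ‖((WithLp.equiv 2 (Fin p → ℂ)).symm y) i‖ = ‖y i‖ := rfl
    rw [this]
    exact pow_le_pow_left₀ (norm_nonneg _) (h i) 2
  calc Real.sqrt (∑ i, ‖((WithLp.equiv 2 (Fin p → ℂ)).symm y) i‖ ^ 2)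
      ≤ Real.sqrt (∑ _i : Fin p, K^2) := Real.sqrt_le_sqrt h1
    _ = K * Real.sqrt p := by
        rw [Finset.sum_const, Finset.card_univ, Fintype.card_fin, nsmul_eq_mul,
          Real.sqrt_mul (by positivity), Real.sqrt_sq hK]
        ring

end Aux

/- STATEMENT 12: For p ≥ 1 and nonzero reals a, b, the set {a·U + b·V : U, V ∈ U(p)} has
nonempty interior in M_p(ℂ). -/

set_option maxHeartbeats 1000000 in
theorem unitary_sum_nonempty_interior
    (p : ℕ) (hp : 1 ≤ p) (a b : ℝ) (ha : a ≠ 0) (hb : b ≠ 0) :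
    (interior {Z : Matrix (Fin p) (Fin p) ℂ |
        ∃ U V : Matrix (Fin p) (Fin p) ℂ,
          Uᴴ * U = 1 ∧ Vᴴ * V = 1 ∧ Z = a • U + b • V}).Nonempty := by
  classical
  set S := {Z : Matrix (Fin p) (Fin p) ℂ |
        ∃ U V : Matrix (Fin p) (Fin p) ℂ,
          Uᴴ * U = 1 ∧ Vᴴ * V = 1 ∧ Z = a • U + b • V} with hSdef
  set A := |a| with hAdef
  set B := |b| with hBdef
  have hA : 0 < A := abs_pos.2 ha
  have hB : 0 < B := abs_pos.2 hb
  set c := max A B with hcdef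
  set r := min A B with hrdef
  have hr : 0 < r := lt_min hA hB
  have hrc : r ≤ c := min_le_max
  have hc : 0 < c := lt_of_lt_of_le hr hrc
  have habs : |A - B| = c - r := by
    rcases le_total A B with h | h
    · rw [abs_of_nonpos (by linarith), hcdef, hrdef, max_eq_right h, min_eq_left h]; ring
    · rw [abs_of_nonneg (by linarith), hcdef, hrdef, max_eq_left h, min_eq_right h]
  have hsum' : A + B = c + r := by
    rcases le_total A B with h | h
    · rw [hcdef, hrdef, max_eq_right h, min_eq_left h]; ring
    · rw [hcdef, hrdef, max_eq_left h, min_eq_right h]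
  set ε := r / (2 * ((p:ℝ) + 1)^2) with hεdef
  have hε : 0 < ε := by positivity
  set C : Matrix (Fin p) (Fin p) ℂ := (c : ℝ) • (1 : Matrix (Fin p) (Fin p) ℂ) with hCdef
  set O := {Z : Matrix (Fin p) (Fin p) ℂ | ∀ i j, ‖(Z - C) i j‖ < ε} with hOdef
  have hO_open : IsOpen O := by
    have hOeq : O = ⋂ (i : Fin p), ⋂ (j : Fin p),
        {Z : Matrix (Fin p) (Fin p) ℂ | ‖(Z - C) i j‖ < ε} := by
      ext Z; simp [hOdef, Set.mem_iInter]
    rw [hOeq]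
    refine isOpen_iInter_of_finite fun i => isOpen_iInter_of_finite fun j => ?_
    have hcont : Continuous fun Z : Matrix (Fin p) (Fin p) ℂ => ‖(Z - C) i j‖ := by
      apply Continuous.norm
      show Continuous fun Z : Matrix (Fin p) (Fin p) ℂ => Z i j - C i j
      exact (continuous_id.matrix_elem i j).sub continuous_const
    exact isOpen_lt hcont continuous_const
  have hCO : C ∈ O := by
    intro i j
    simpa using hε
  -- Main inclusion
  have hsub : O ⊆ S := by
    intro Z hZ
    -- spectral data of Zᴴ * Z
    have hH : (Zᴴ * Z).IsHermitian := Matrix.isHermitian_conjTranspose_mul_self Z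
    set μ := hH.eigenvalues with hμdef
    have hμ0 : ∀ i, 0 ≤ μ i := fun i =>
      Matrix.eigenvalues_conjTranspose_mul_self_nonneg Z i
    set d : Fin p → ℝ := fun i => Real.sqrt (μ i) with hddef
    -- eigenvalue bounds
    have key : ∀ i, |d i - c| ≤ r / 2 := by
      intro i
      set x : EuclideanSpace ℂ (Fin p) := hH.eigenvectorBasis i with hxdef
      have hx1 : ‖x‖ = 1 := hH.eigenvectorBasis.orthonormal.1 i
      have hmv : (Zᴴ * Z) *ᵥ ⇑x = μ i • ⇑x := hH.mulVec_eigenvectorBasis i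
      set w : EuclideanSpace ℂ (Fin p) := (WithLp.equiv 2 (Fin p → ℂ)).symm (Z *ᵥ ⇑x) with hwdef
      have e1 : dotProduct (star (⇑x)) ((Zᴴ * Z) *ᵥ ⇑x) = ((μ i : ℝ) : ℂ) := by
        rw [hmv, dotProduct_smul]
        have hxx : dotProduct (star (⇑x)) (⇑x) = 1 := by
          have h' := EuclideanSpace.inner_eq_star_dotProduct x x
          rw [inner_self_eq_norm_sq_to_K, hx1, dotProduct_comm] at h'
          rw [← h']
          norm_num
        rw [hxx, Complex.real_smul, mul_one]
      have e2 : dotProduct (star (⇑x)) ((Zᴴ * Z) *ᵥ ⇑x) = ((‖w‖^2 : ℝ) : ℂ) := by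
        rw [← Matrix.mulVec_mulVec, Matrix.dotProduct_mulVec, ← Matrix.star_mulVec]
        have h' := EuclideanSpace.inner_toLp_toLp (𝕜 := ℂ) (Z *ᵥ ⇑x) (Z *ᵥ ⇑x)
        rw [inner_self_eq_norm_sq_to_K, dotProduct_comm] at h'
        rw [← h']
        norm_cast
      have e3 : μ i = ‖w‖^2 := by
        have := e1.symm.trans e2
        exact_mod_cast this
      have e4 : d i = ‖w‖ := by
        rw [hddef]; simp only; rw [e3, Real.sqrt_sq (norm_nonneg w)]
      -- component bound on x
      have hxj : ∀ j, ‖(⇑x) j‖ ≤ 1 := by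
        intro j
        have hn := EuclideanSpace.norm_eq x
        rw [hx1] at hn
        have hsum1 : ∑ k, ‖x k‖^2 = 1 := by
          have h0 : (0:ℝ) ≤ ∑ k, ‖x k‖^2 := by positivity
          nlinarith [Real.sq_sqrt h0, hn.symm]
        have hle : ‖x j‖^2 ≤ 1 := by
          rw [← hsum1]
          exact Finset.single_le_sum (f := fun k => ‖x k‖^2)
            (fun k _ => by positivity) (Finset.mem_univ j)
        show ‖x j‖ ≤ 1
        nlinarith [norm_nonneg (x j)]
      -- component bound on error
      have hEcomp : ∀ i', ‖((Z - C) *ᵥ ⇑x) i'‖ ≤ ε * p := by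
        intro i'
        have : ((Z - C) *ᵥ ⇑x) i' = ∑ j, (Z - C) i' j * (⇑x) j := rfl
        rw [this]
        calc ‖∑ j, (Z - C) i' j * (⇑x) j‖ ≤ ∑ j, ‖(Z - C) i' j * (⇑x) j‖ :=
              norm_sum_le _ _
          _ ≤ ∑ _j : Fin p, ε := by
              apply Finset.sum_le_sum
              intro j _
              rw [norm_mul]
              calc ‖(Z - C) i' j‖ * ‖(⇑x) j‖ ≤ ε * 1 :=
                    mul_le_mul (le_of_lt (hZ i' j)) (hxj j) (norm_nonneg _) (le_of_lt hε)
                _ = ε := mul_one ε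
          _ = ε * p := by
              rw [Finset.sum_const, Finset.card_univ, Fintype.card_fin, nsmul_eq_mul]
              ring
      have hdiff : w - (c : ℝ) • x = (WithLp.equiv 2 (Fin p → ℂ)).symm ((Z - C) *ᵥ ⇑x) := by
        have hvec : (Z - C) *ᵥ ⇑x = Z *ᵥ ⇑x - (c : ℝ) • ⇑x := by
          rw [Matrix.sub_mulVec, hCdef, Matrix.smul_mulVec, Matrix.one_mulVec]
        rw [hvec]
        rfl
      have hwbound : ‖w - (c : ℝ) • x‖ ≤ ε * p * Real.sqrt p := by
        rw [hdiff]
        exact euclidean_norm_le _ (ε * p) (by positivity) hEcomp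
      have hnorm_cx : ‖(c : ℝ) • x‖ = c := by
        rw [norm_smul, Real.norm_eq_abs, abs_of_pos hc, hx1, mul_one]
      have htri : |‖w‖ - c| ≤ ε * p * Real.sqrt p := by
        calc |‖w‖ - c| = |‖w‖ - ‖(c : ℝ) • x‖| := by rw [hnorm_cx]
          _ ≤ ‖w - (c : ℝ) • x‖ := abs_norm_sub_norm_le _ _
          _ ≤ ε * p * Real.sqrt p := hwbound
      have hεp : ε * p * Real.sqrt p ≤ r / 2 := by
        have h1 : Real.sqrt p ≤ (p : ℝ) + 1 := by
          rw [show ((p:ℝ) + 1) = Real.sqrt (((p:ℝ)+1)^2) by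
            rw [Real.sqrt_sq (by positivity)]]
          exact Real.sqrt_le_sqrt (by nlinarith [Nat.cast_nonneg (α := ℝ) p])
        have h2 : (p : ℝ) ≤ (p : ℝ) + 1 := by linarith
        have h0 : (0:ℝ) ≤ (p:ℝ) := Nat.cast_nonneg p
        have hs0 : (0:ℝ) ≤ Real.sqrt p := Real.sqrt_nonneg _
        rw [hεdef]
        have h3 : (p:ℝ) * Real.sqrt p ≤ ((p:ℝ)+1) * ((p:ℝ)+1) :=
          mul_le_mul h2 h1 hs0 (by positivity)
        rw [div_mul_eq_mul_div, div_mul_eq_mul_div, div_le_div_iff₀ (by positivity) (by norm_num)]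
        nlinarith [mul_le_mul_of_nonneg_left h3 hr.le]
      rw [e4]
      exact le_trans htri hεp
    -- scalar decompositions
    have hd_lo : ∀ i, |(|a| - |b|)| < d i := by
      intro i
      have := key i
      have h1 : c - r/2 ≤ d i := by
        have := abs_le.mp (key i)
        linarith [this.1]
      rw [← hAdef, ← hBdef, habs]
      linarith
    have hd_hi : ∀ i, d i < |a| + |b| := by
      intro i
      have := abs_le.mp (key i)
      rw [← hAdef, ← hBdef, hsum']
      linarith [this.2]
    have hd_pos : ∀ i, 0 < d i := fun i =>
      lt_of_le_of_lt (abs_nonneg _) (hd_lo i)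
    have hchoice : ∀ i, ∃ u v : ℂ, star u * u = 1 ∧ star v * v = 1 ∧
        (a : ℂ) * u + (b : ℂ) * v = ((d i : ℝ) : ℂ) :=
      fun i => scalar_decomp a b (d i) ha hb (hd_lo i) (hd_hi i)
    choose u v hu hv huv using hchoice
    -- matrix construction
    set Q : Matrix (Fin p) (Fin p) ℂ := (hH.eigenvectorUnitary : Matrix (Fin p) (Fin p) ℂ)
      with hQdef
    have hQ1 : Qᴴ * Q = 1 := by
      rw [← Matrix.star_eq_conjTranspose]
      exact Matrix.mem_unitaryGroup_iff'.mp hH.eigenvectorUnitary.2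
    have hQ2 : Q * Qᴴ = 1 := by
      rw [← Matrix.star_eq_conjTranspose]
      exact Matrix.mem_unitaryGroup_iff.mp hH.eigenvectorUnitary.2
    have spec : Zᴴ * Z = Q * diagonal (fun i => ((μ i : ℝ) : ℂ)) * Qᴴ := by
      have h' := hH.spectral_theorem
      rw [← Matrix.star_eq_conjTranspose]
      exact h'
    set Pinv : Matrix (Fin p) (Fin p) ℂ :=
      Q * diagonal (fun i => (((d i)⁻¹ : ℝ) : ℂ)) * Qᴴ with hPinvdef
    set P : Matrix (Fin p) (Fin p) ℂ :=
      Q * diagonal (fun i => ((d i : ℝ) : ℂ)) * Qᴴ with hPdef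
    set W : Matrix (Fin p) (Fin p) ℂ := Z * Pinv with hWdef
    have hPinvP : Pinv * P = 1 := by
      rw [hPinvdef, hPdef, key_mul Q hQ1]
      have : (fun i => (((d i)⁻¹ : ℝ) : ℂ) * ((d i : ℝ) : ℂ)) = fun _ => (1 : ℂ) := by
        funext i
        rw [← Complex.ofReal_mul, inv_mul_cancel₀ (ne_of_gt (hd_pos i))]
        norm_num
      rw [this, Matrix.diagonal_one, Matrix.mul_one, hQ2]
    have hWP : W * P = Z := by
      rw [hWdef, Matrix.mul_assoc, hPinvP, Matrix.mul_one]
    have hPinvH : Pinvᴴ = Pinv := by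
      rw [hPinvdef, conj_sandwich]
      have : (fun i => star ((((d i)⁻¹ : ℝ)) : ℂ)) = fun i => ((((d i)⁻¹ : ℝ)) : ℂ) := by
        funext i
        rw [Complex.star_def]
        exact Complex.conj_ofReal _
      rw [this]
    have hWW : Wᴴ * W = 1 := by
      have h1 : Wᴴ * W = Pinvᴴ * (Zᴴ * Z) * Pinv := by
        rw [hWdef, Matrix.conjTranspose_mul]
        simp only [Matrix.mul_assoc]
      rw [h1, hPinvH, spec, hPinvdef]
      rw [show Q * diagonal (fun i => (((d i)⁻¹ : ℝ) : ℂ)) * Qᴴ *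
            (Q * diagonal (fun i => ((μ i : ℝ) : ℂ)) * Qᴴ) *
            (Q * diagonal (fun i => (((d i)⁻¹ : ℝ) : ℂ)) * Qᴴ)
          = (Q * diagonal (fun i => (((d i)⁻¹ : ℝ) : ℂ)) * Qᴴ *
            (Q * diagonal (fun i => ((μ i : ℝ) : ℂ)) * Qᴴ)) *
            (Q * diagonal (fun i => (((d i)⁻¹ : ℝ) : ℂ)) * Qᴴ) from rfl]
      rw [key_mul Q hQ1, key_mul Q hQ1]
      have : (fun i => (((d i)⁻¹ : ℝ) : ℂ) * ((μ i : ℝ) : ℂ) * (((d i)⁻¹ : ℝ) : ℂ))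
          = fun _ => (1 : ℂ) := by
        funext i
        rw [← Complex.ofReal_mul, ← Complex.ofReal_mul, Complex.ofReal_eq_one]
        have hμd : μ i = (d i)^2 := (Real.sq_sqrt (hμ0 i)).symm
        rw [hμd]
        rw [show (d i)⁻¹ * (d i)^2 * (d i)⁻¹ = ((d i)⁻¹ * d i) * (d i * (d i)⁻¹) by ring,
          inv_mul_cancel₀ (ne_of_gt (hd_pos i)), mul_inv_cancel₀ (ne_of_gt (hd_pos i)), one_mul]
      rw [this, Matrix.diagonal_one, Matrix.mul_one, hQ2]
    -- the unitaries
    refine ⟨W * (Q * diagonal u * Qᴴ), W * (Q * diagonal v * Qᴴ), ?_, ?_, ?_⟩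
    · rw [Matrix.conjTranspose_mul, conj_sandwich]
      have h1 : Q * diagonal (fun i => star (u i)) * Qᴴ * Wᴴ * (W * (Q * diagonal u * Qᴴ))
          = Q * diagonal (fun i => star (u i)) * Qᴴ * (Wᴴ * W) * (Q * diagonal u * Qᴴ) := by
        simp only [Matrix.mul_assoc]
      rw [h1, hWW, Matrix.mul_one, key_mul Q hQ1]
      have : (fun i => star (u i) * u i) = fun _ => (1 : ℂ) := by
        funext i; exact hu i
      rw [this, Matrix.diagonal_one, Matrix.mul_one, hQ2]
    · rw [Matrix.conjTranspose_mul, conj_sandwich]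
      have h1 : Q * diagonal (fun i => star (v i)) * Qᴴ * Wᴴ * (W * (Q * diagonal v * Qᴴ))
          = Q * diagonal (fun i => star (v i)) * Qᴴ * (Wᴴ * W) * (Q * diagonal v * Qᴴ) := by
        simp only [Matrix.mul_assoc]
      rw [h1, hWW, Matrix.mul_one, key_mul Q hQ1]
      have : (fun i => star (v i) * v i) = fun _ => (1 : ℂ) := by
        funext i; exact hv i
      rw [this, Matrix.diagonal_one, Matrix.mul_one, hQ2]
    · -- Z = a • U + b • V
      have hsmul : ∀ (t : ℝ) (f : Fin p → ℂ),
          t • (W * (Q * diagonal f * Qᴴ)) = W * (Q * diagonal (fun i => (t : ℂ) * f i) * Qᴴ) := by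
        intro t f
        have h1 : t • (W * (Q * diagonal f * Qᴴ)) = W * (t • (Q * diagonal f * Qᴴ)) :=
          (Matrix.mul_smul W t (Q * diagonal f * Qᴴ)).symm
        have h2 : t • (Q * diagonal f * Qᴴ) = (t • (Q * diagonal f)) * Qᴴ :=
          (Matrix.smul_mul t (Q * diagonal f) Qᴴ).symm
        have h3 : t • (Q * diagonal f) = Q * (t • diagonal f) :=
          (Matrix.mul_smul Q t (diagonal f)).symm
        have h4 : t • diagonal f = diagonal (fun i => (t : ℂ) * f i) := by
          have hf : (fun i => (t : ℂ) * f i) = t • f := by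
            funext i; simp [Complex.real_smul]
          rw [hf, Matrix.diagonal_smul]
        rw [h1, h2, h3, h4]
      rw [hsmul a u, hsmul b v, ← Matrix.mul_add, ← Matrix.add_mul, ← Matrix.mul_add,
        Matrix.diagonal_add]
      have huv' : (fun i => (a : ℂ) * u i + (b : ℂ) * v i) = fun i => ((d i : ℝ) : ℂ) := by
        funext i; exact huv i
      rw [huv']
      rw [← hPdef]
      rw [hWP]
  exact ⟨C, (interior_maximal hsub hO_open) hCO⟩
end

section
/- Let p ≥ 1 and let a, b be nonzero real numbers. Then the set {a·U + b·V : U, V ∈ Sp(p)} has nonempty interior in M_p(ℍ). (This is the pair (SU(p),SU(p)) in the symmetric space Sp(p,p)/Sp(p)×Sp(p), whose restricted root system is of type C_p: the orbit of the element a·I under the K-action is a·Sp(p).) -/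
set_option maxHeartbeats 1000000

open Matrix Quaternion

noncomputable section QuatAux

/-- `cq x y = x + y i` as a quaternion. -/
def cq (x y : ℝ) : Quaternion ℝ := ⟨x, y, 0, 0⟩

/-- Solution of the Sylvester equation `y * (γ₂ + δ₂ i) - (γ₁ - δ₁ i) * y = h`,
with `A = γ₂ - γ₁`, `B = δ₂ + δ₁`, `C = δ₂ - δ₁`. -/
def qsol (A B C : ℝ) (h : Quaternion ℝ) : Quaternion ℝ :=
  ⟨(A*h.re + B*h.imI)/(A^2+B^2), (A*h.imI - B*h.re)/(A^2+B^2),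
   (A*h.imJ - C*h.imK)/(A^2+C^2), (A*h.imK + C*h.imJ)/(A^2+C^2)⟩

def qsoldiag (d : ℝ) (h : Quaternion ℝ) : Quaternion ℝ := ⟨0, -h.re/(2*d), 0, 0⟩

@[simp] lemma cq_re (x y : ℝ) : (cq x y).re = x := rfl
@[simp] lemma cq_imI (x y : ℝ) : (cq x y).imI = y := rfl
@[simp] lemma cq_imJ (x y : ℝ) : (cq x y).imJ = 0 := rfl
@[simp] lemma cq_imK (x y : ℝ) : (cq x y).imK = 0 := rfl
@[simp] lemma qsol_re (A B C : ℝ) (h : Quaternion ℝ) :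
    (qsol A B C h).re = (A*h.re + B*h.imI)/(A^2+B^2) := rfl
@[simp] lemma qsol_imI (A B C : ℝ) (h : Quaternion ℝ) :
    (qsol A B C h).imI = (A*h.imI - B*h.re)/(A^2+B^2) := rfl
@[simp] lemma qsol_imJ (A B C : ℝ) (h : Quaternion ℝ) :
    (qsol A B C h).imJ = (A*h.imJ - C*h.imK)/(A^2+C^2) := rfl
@[simp] lemma qsol_imK (A B C : ℝ) (h : Quaternion ℝ) :
    (qsol A B C h).imK = (A*h.imK + C*h.imJ)/(A^2+C^2) := rfl
@[simp] lemma qsoldiag_re (d : ℝ) (h : Quaternion ℝ) : (qsoldiag d h).re = 0 := rfl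
@[simp] lemma qsoldiag_imI (d : ℝ) (h : Quaternion ℝ) :
    (qsoldiag d h).imI = -h.re/(2*d) := rfl
@[simp] lemma qsoldiag_imJ (d : ℝ) (h : Quaternion ℝ) : (qsoldiag d h).imJ = 0 := rfl
@[simp] lemma qsoldiag_imK (d : ℝ) (h : Quaternion ℝ) : (qsoldiag d h).imK = 0 := rfl

lemma qsol_spec (γ₁ δ₁ γ₂ δ₂ : ℝ) (hA : γ₂ - γ₁ ≠ 0) (h : Quaternion ℝ) :
    qsol (γ₂ - γ₁) (δ₂ + δ₁) (δ₂ - δ₁) h * cq γ₂ δ₂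
      - cq γ₁ (-δ₁) * qsol (γ₂ - γ₁) (δ₂ + δ₁) (δ₂ - δ₁) h = h := by
  have h1 : (γ₂ - γ₁)^2 + (δ₂ + δ₁)^2 ≠ 0 := by positivity
  have h2 : (γ₂ - γ₁)^2 + (δ₂ - δ₁)^2 ≠ 0 := by positivity
  ext <;> simp [Quaternion.re_mul, Quaternion.imI_mul, Quaternion.imJ_mul,
    Quaternion.imK_mul] <;> field_simp <;> ring

lemma qsoldiag_spec (γ d : ℝ) (hd : d ≠ 0) (h : Quaternion ℝ)
    (h1 : h.imI = 0) (h2 : h.imJ = 0) (h3 : h.imK = 0) :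
    qsoldiag d h * cq γ d - cq γ (-d) * qsoldiag d h = h := by
  ext <;> simp [Quaternion.re_mul, Quaternion.imI_mul, Quaternion.imJ_mul,
    Quaternion.imK_mul, h1, h2, h3] <;> field_simp <;> ring

lemma qsol_star (A B C : ℝ) (h : Quaternion ℝ) :
    star (qsol (-A) B (-C) (star h)) = - qsol A B C h := by
  ext <;> simp <;> ring

lemma qsoldiag_star (d : ℝ) (h : Quaternion ℝ) :
    star (qsoldiag d (star h)) = - qsoldiag d h := by
  ext <;> simp

lemma qsol_add (A B C : ℝ) (x y : Quaternion ℝ) :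
    qsol A B C (x + y) = qsol A B C x + qsol A B C y := by
  ext <;> simp <;> ring

lemma qsol_smul (A B C : ℝ) (r : ℝ) (x : Quaternion ℝ) :
    qsol A B C (r • x) = r • qsol A B C x := by
  ext <;> simp [Quaternion.re_smul] <;> ring

lemma qsoldiag_add (d : ℝ) (x y : Quaternion ℝ) :
    qsoldiag d (x + y) = qsoldiag d x + qsoldiag d y := by
  ext <;> simp <;> ring

lemma qsoldiag_smul (d : ℝ) (r : ℝ) (x : Quaternion ℝ) :
    qsoldiag d (r • x) = r • qsoldiag d x := by
  ext <;> simp <;> ring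

lemma cq_star (x y : ℝ) : star (cq x y) = cq x (-y) := by
  ext <;> simp

lemma cq_star_mul_self (x y : ℝ) (h : x^2 + y^2 = 1) : star (cq x y) * cq x y = 1 := by
  ext <;> simp [Quaternion.re_mul, Quaternion.imI_mul, Quaternion.imJ_mul,
    Quaternion.imK_mul] <;> nlinarith [h]

end QuatAux

namespace QuatSpAux

attribute [local instance] Matrix.linftyOpNormedRing Matrix.linftyOpNormedAlgebra

noncomputable section

variable (p : ℕ)

abbrev M (p : ℕ) := Matrix (Fin p) (Fin p) (Quaternion ℝ)

def gam (j : Fin p) : ℝ := 1/((j:ℝ)+2)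

lemma gam_pos (j : Fin p) : 0 < gam p j := by
  have : (0:ℝ) ≤ (j:ℝ) := Nat.cast_nonneg _
  unfold gam; positivity

lemma gam_lt_one (j : Fin p) : gam p j < 1 := by
  have : (0:ℝ) ≤ (j:ℝ) := Nat.cast_nonneg _
  rw [gam, div_lt_one (by linarith)]; linarith

lemma gam_inj {j k : Fin p} (h : gam p j = gam p k) : j = k := by
  have hj : ((j:ℝ)+2) ≠ 0 := by have : (0:ℝ) ≤ (j:ℝ) := Nat.cast_nonneg _; linarith
  have hk : ((k:ℝ)+2) ≠ 0 := by have : (0:ℝ) ≤ (k:ℝ) := Nat.cast_nonneg _; linarith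
  rw [gam, gam, div_eq_div_iff hj hk] at h
  have : ((j:ℕ) : ℝ) = ((k:ℕ) : ℝ) := by push_cast at h ⊢; linarith
  exact Fin.ext (Nat.cast_injective this)

def del (j : Fin p) : ℝ := Real.sqrt (1 - gam p j ^ 2)

lemma del_sq (j : Fin p) : del p j ^ 2 = 1 - gam p j ^ 2 := by
  rw [del, Real.sq_sqrt]
  nlinarith [gam_pos p j, gam_lt_one p j]

lemma del_pos (j : Fin p) : 0 < del p j := by
  rw [del]
  apply Real.sqrt_pos.2
  nlinarith [gam_pos p j, gam_lt_one p j]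

def v (j : Fin p) : Quaternion ℝ := cq (gam p j) (del p j)

def V₀ : M p := diagonal (v p)

lemma v_unit (j : Fin p) : star (v p j) * v p j = 1 :=
  cq_star_mul_self (gam p j) (del p j) (by rw [del_sq]; ring)

lemma V₀_unitary : star (V₀ p) * V₀ p = 1 := by
  rw [Matrix.star_eq_conjTranspose, V₀, Matrix.diagonal_conjTranspose,
    Matrix.diagonal_mul_diagonal]
  funext i i'
  rcases eq_or_ne i i' with rfl | h
  · simp [Matrix.diagonal_apply_eq, Pi.star_apply, v_unit p i, Matrix.one_apply_eq]
  · simp [Matrix.diagonal_apply_ne _ h, Matrix.one_apply_ne h]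

/-- Entrywise solver for the matrix Sylvester equation. -/
def Yent (j k : Fin p) : Quaternion ℝ → Quaternion ℝ :=
  if j = k then qsoldiag (del p j)
  else qsol (gam p k - gam p j) (del p k + del p j) (del p k - del p j)

def Yfun (W : M p) : M p := fun j k => Yent p j k ((W + Wᴴ) j k)

lemma herm_entry (W : M p) (j k : Fin p) : (W + Wᴴ) k j = star ((W + Wᴴ) j k) := by
  simp [Matrix.conjTranspose_apply, add_comm]

lemma Yent_spec (j k : Fin p) (h : Quaternion ℝ)
    (hd : j = k → h.imI = 0 ∧ h.imJ = 0 ∧ h.imK = 0) :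
    Yent p j k h * v p k - star (v p j) * Yent p j k h = h := by
  rcases eq_or_ne j k with rfl | hjk
  · obtain ⟨h1, h2, h3⟩ := hd rfl
    rw [Yent, if_pos rfl, v, cq_star]
    exact qsoldiag_spec (gam p j) (del p j) (del_pos p j).ne' h h1 h2 h3
  · rw [Yent, if_neg hjk, v, v, cq_star]
    exact qsol_spec (gam p j) (del p j) (gam p k) (del p k)
      (sub_ne_zero.2 fun hh => hjk (gam_inj p hh).symm) h

lemma Yfun_spec (W : M p) : Yfun p W * V₀ p - star (V₀ p) * Yfun p W = W + Wᴴ := by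
  funext j k
  rw [Matrix.sub_apply, Matrix.star_eq_conjTranspose, V₀, Matrix.diagonal_conjTranspose,
    Matrix.mul_diagonal, Matrix.diagonal_mul]
  have hd : j = k → ((W + Wᴴ) j k).imI = 0 ∧ ((W + Wᴴ) j k).imJ = 0 ∧ ((W + Wᴴ) j k).imK = 0 := by
    rintro rfl
    refine ⟨?_, ?_, ?_⟩ <;> simp [Matrix.conjTranspose_apply]
  have := Yent_spec p j k ((W + Wᴴ) j k) hd
  simpa [Yfun, Function.comp] using this

lemma Yfun_skew (W : M p) : (Yfun p W)ᴴ = -(Yfun p W) := by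
  funext j k
  rw [Matrix.conjTranspose_apply, Matrix.neg_apply]
  simp only [Yfun]
  rcases eq_or_ne k j with rfl | hkj
  · simp only [Yent, if_pos rfl]
    conv_lhs => rw [herm_entry p W k k]
    exact qsoldiag_star _ _
  · have hjk : j ≠ k := fun h => hkj h.symm
    simp only [Yent, if_neg hkj, if_neg hjk]
    rw [herm_entry p W j k]
    rw [show gam p j - gam p k = -(gam p k - gam p j) by ring,
        show del p j + del p k = del p k + del p j from add_comm _ _,
        show del p j - del p k = -(del p k - del p j) by ring]
    exact qsol_star _ _ _ _

def Y₁ : M p →ₗ[ℝ] M p where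
  toFun := Yfun p
  map_add' W W' := by
    funext j k
    have h : ((W + W') + (W + W')ᴴ) j k = (W + Wᴴ) j k + (W' + W'ᴴ) j k := by
      simp only [Matrix.conjTranspose_apply, Matrix.add_apply, star_add]
      abel
    simp only [Yfun, Matrix.add_apply, h]
    unfold Yent
    split
    · exact qsoldiag_add _ _ _
    · exact qsol_add _ _ _ _ _
  map_smul' r W := by
    funext j k
    have h : ((r • W) + (r • W)ᴴ) j k = r • ((W + Wᴴ) j k) := by
      simp only [Matrix.conjTranspose_apply, Matrix.add_apply, Matrix.smul_apply,
        Quaternion.star_smul, smul_add]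
    simp only [Yfun, RingHom.id_apply, Matrix.smul_apply, h]
    unfold Yent
    split
    · exact qsoldiag_smul _ _ _
    · exact qsol_smul _ _ _ _ _

variable {p}

/-- The Cayley transform. -/
def cay (X : M p) : M p := (1 - X) * Ring.inverse (1 + X)

lemma cay_unitary (X : M p) (hX : Xᴴ = -X) (hu : IsUnit (1 + X)) :
    star (cay X) * cay X = 1 := by
  have hstar : star (1 + X) = 1 - X := by
    rw [star_add, star_one, Matrix.star_eq_conjTranspose, hX]
    abel
  have hu' : IsUnit (1 - X) := hstar ▸ hu.star
  have hcomm : (1 + X) * (1 - X) = (1 - X) * (1 + X) := by noncomm_ring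
  calc star ((1 - X) * Ring.inverse (1 + X)) * ((1 - X) * Ring.inverse (1 + X))
      = Ring.inverse (star (1 + X)) * (star (1 - X) * (1 - X)) * Ring.inverse (1 + X) := by
        rw [StarMul.star_mul, Ring.inverse_star]
        noncomm_ring
    _ = Ring.inverse (1 - X) * ((1 + X) * (1 - X)) * Ring.inverse (1 + X) := by
        rw [hstar]
        congr 2
        rw [star_sub, star_one, Matrix.star_eq_conjTranspose, hX]
        abel
    _ = (Ring.inverse (1 - X) * (1 - X)) * ((1 + X) * Ring.inverse (1 + X)) := by
        rw [hcomm]; noncomm_ring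
    _ = 1 := by rw [Ring.inverse_mul_cancel _ hu', Ring.mul_inverse_cancel _ hu, one_mul]

lemma cay_strict {p : ℕ} :
    HasStrictFDerivAt (cay (p := p)) ((-2 : ℝ) • ContinuousLinearMap.id ℝ (M p)) 0 := by
  have hadd : HasStrictFDerivAt (fun X : M p => 1 + X)
      (ContinuousLinearMap.id ℝ (M p)) 0 := (hasStrictFDerivAt_id (0 : M p)).const_add 1
  have h1 : HasStrictFDerivAt (fun X : M p => 1 - X)
      (-(ContinuousLinearMap.id ℝ (M p))) 0 := (hasStrictFDerivAt_id (0 : M p)).const_sub 1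
  have hinv := hasStrictFDerivAt_ringInverse (𝕜 := ℝ) (1 : (M p)ˣ)
  have h : Units.val (1 : (M p)ˣ) = 1 + (0 : M p) := by rw [Units.val_one, add_zero]
  rw [h] at hinv
  have h2 := hinv.comp (0 : M p) hadd
  have hmul := h1.mul' h2
  have h0 : cay (p := p) = fun X : M p => (1 - X) * Ring.inverse (1 + X) := rfl
  rw [h0]
  refine hmul.congr_fderiv ?_
  refine ContinuousLinearMap.ext fun W => ?_
  simp [ContinuousLinearMap.mulLeftRight_apply, two_smul]
  change -((1 : M p) * W * 1) + (-W) * 1 = (-2:ℝ) • W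
  rw [one_mul, mul_one, mul_one, neg_smul, two_smul, neg_add]

variable (p)

def Y₁c : M p →L[ℝ] M p := LinearMap.toContinuousLinearMap (Y₁ p)

def RV : M p →L[ℝ] M p := (ContinuousLinearMap.mul ℝ (M p)).flip (V₀ p)

def L₁ (a : ℝ) : M p →L[ℝ] M p :=
  ((-(2*a))⁻¹ : ℝ) • (ContinuousLinearMap.id ℝ (M p) - (RV p).comp (Y₁c p))

def L₂ (b : ℝ) : M p →L[ℝ] M p := ((-(2*b))⁻¹ : ℝ) • Y₁c p

def F (a b : ℝ) (W : M p) : M p :=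
  a • cay (L₁ p a W) + b • (cay (L₂ p b W) * V₀ p)

lemma L₁_apply (a : ℝ) (W : M p) :
    L₁ p a W = ((-(2*a))⁻¹ : ℝ) • (W - Yfun p W * V₀ p) := rfl

lemma L₂_apply (b : ℝ) (W : M p) :
    L₂ p b W = ((-(2*b))⁻¹ : ℝ) • Yfun p W := rfl

lemma conjT_rsmul (r : ℝ) (A : M p) : (r • A)ᴴ = r • Aᴴ := by
  funext i j
  simp [Matrix.conjTranspose_apply, Quaternion.star_smul]

lemma X₁_skew (W : M p) : (W - Yfun p W * V₀ p)ᴴ = -(W - Yfun p W * V₀ p) := by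
  have hs := Yfun_spec p W
  rw [Matrix.star_eq_conjTranspose] at hs
  have hk := Yfun_skew p W
  have h' : (V₀ p)ᴴ * Yfun p W = Yfun p W * V₀ p - (W + Wᴴ) := by
    rw [← hs]; abel
  rw [Matrix.conjTranspose_sub, Matrix.conjTranspose_mul, hk, Matrix.mul_neg, h']
  abel

lemma L₁_skew (a : ℝ) (W : M p) : (L₁ p a W)ᴴ = -(L₁ p a W) := by
  rw [L₁_apply, conjT_rsmul, X₁_skew, smul_neg]

lemma L₂_skew (b : ℝ) (W : M p) : (L₂ p b W)ᴴ = -(L₂ p b W) := by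
  rw [L₂_apply, conjT_rsmul, Yfun_skew, smul_neg]

lemma combine (a b : ℝ) (ha : a ≠ 0) (hb : b ≠ 0) (X Y : M p) :
    a • ((-2:ℝ) • (((-(2*a))⁻¹ : ℝ) • X)) + b • (((-2:ℝ) • (((-(2*b))⁻¹ : ℝ) • Y)) * V₀ p)
      = X + Y * V₀ p := by
  have e1 : a * -2 * (-(2*a))⁻¹ = 1 := by field_simp
  have e2 : b * -2 * (-(2*b))⁻¹ = 1 := by field_simp
  rw [smul_smul, smul_smul, e1, smul_mul_assoc, smul_smul, smul_mul_assoc, smul_smul, e2, one_smul, one_smul]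

lemma F_deriv (a b : ℝ) (ha : a ≠ 0) (hb : b ≠ 0) :
    HasStrictFDerivAt (F p a b) (ContinuousLinearMap.id ℝ (M p)) 0 := by
  have hc1 : HasStrictFDerivAt (cay (p := p))
      ((-2 : ℝ) • ContinuousLinearMap.id ℝ (M p)) (L₁ p a 0) := by
    rw [map_zero]; exact cay_strict
  have h₁ : HasStrictFDerivAt (fun W : M p => cay (L₁ p a W))
      (((-2 : ℝ) • ContinuousLinearMap.id ℝ (M p)).comp (L₁ p a)) 0 :=
    hc1.comp 0 (L₁ p a).hasStrictFDerivAt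
  have hc2 : HasStrictFDerivAt (cay (p := p))
      ((-2 : ℝ) • ContinuousLinearMap.id ℝ (M p)) (L₂ p b 0) := by
    rw [map_zero]; exact cay_strict
  have h₂ : HasStrictFDerivAt (fun W : M p => cay (L₂ p b W))
      (((-2 : ℝ) • ContinuousLinearMap.id ℝ (M p)).comp (L₂ p b)) 0 :=
    hc2.comp 0 (L₂ p b).hasStrictFDerivAt
  have h₂' := h₂.mul_const' (V₀ p)
  have hsum := (h₁.const_smul a).add (h₂'.const_smul b)
  have hF : F p a b = fun W : M p =>
      a • cay (L₁ p a W) + b • (cay (L₂ p b W) * V₀ p) := rfl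
  rw [hF]
  refine hsum.congr_fderiv ?_
  refine ContinuousLinearMap.ext fun W => ?_
  simp only [ContinuousLinearMap.coe_id', id_eq, ContinuousLinearMap.add_apply,
    ContinuousLinearMap.smul_apply, ContinuousLinearMap.coe_comp', Function.comp_apply,
    ContinuousLinearMap.smulRight_apply, smul_eq_mul, L₁_apply, L₂_apply]
  change a • ((-2:ℝ) • (((-(2*a))⁻¹ : ℝ) • (W - Yfun p W * V₀ p))) + b • (((-2:ℝ) • (((-(2*b))⁻¹ : ℝ) • Yfun p W)) * V₀ p) = W
  rw [combine p a b ha hb, sub_add_cancel]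

lemma F_mem (a b : ℝ) (W : M p)
    (h1 : IsUnit (1 + L₁ p a W)) (h2 : IsUnit (1 + L₂ p b W)) :
    ∃ U V : M p, star U * U = 1 ∧ star V * V = 1 ∧ F p a b W = a • U + b • V := by
  refine ⟨cay (L₁ p a W), cay (L₂ p b W) * V₀ p, ?_, ?_, rfl⟩
  · exact cay_unitary _ (L₁_skew p a W) h1
  · have hC := cay_unitary _ (L₂_skew p b W) h2
    rw [StarMul.star_mul, mul_assoc, ← mul_assoc (star (cay (L₂ p b W))), hC, one_mul]
    exact V₀_unitary p

theorem aux (p : ℕ) (hp : 1 ≤ p) (a b : ℝ) (ha : a ≠ 0) (hb : b ≠ 0) :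
    (interior {Z : Matrix (Fin p) (Fin p) (Quaternion ℝ) |
        ∃ U V : Matrix (Fin p) (Fin p) (Quaternion ℝ),
          star U * U = 1 ∧ star V * V = 1 ∧ Z = a • U + b • V}).Nonempty := by
  refine ⟨F p a b 0, ?_⟩
  rw [mem_interior_iff_mem_nhds]
  have hF := F_deriv p a b ha hb
  have hF' : HasStrictFDerivAt (F p a b)
      ((ContinuousLinearEquiv.refl ℝ (M p) : M p ≃L[ℝ] M p) : M p →L[ℝ] M p) 0 := by
    rw [ContinuousLinearEquiv.coe_refl]
    exact hF
  have hmap : Filter.map (F p a b) (nhds 0) = nhds (F p a b 0) :=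
    hF'.map_nhds_eq_of_equiv
  set O : Set (M p) := {W | IsUnit (1 + L₁ p a W) ∧ IsUnit (1 + L₂ p b W)} with hOdef
  have hO : IsOpen O := by
    have o1 : IsOpen {W : M p | IsUnit (1 + L₁ p a W)} :=
      Units.isOpen.preimage (continuous_const.add (L₁ p a).continuous)
    have o2 : IsOpen {W : M p | IsUnit (1 + L₂ p b W)} :=
      Units.isOpen.preimage (continuous_const.add (L₂ p b).continuous)
    exact o1.inter o2
  have h0O : (0 : M p) ∈ O := by
    constructor <;> simp only [map_zero, add_zero] <;> exact isUnit_one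
  have himg : F p a b '' O ∈ nhds (F p a b 0) := by
    rw [← hmap]
    exact Filter.image_mem_map (hO.mem_nhds h0O)
  refine Filter.mem_of_superset himg ?_
  rintro _ ⟨W, hW, rfl⟩
  exact F_mem p a b W hW.1 hW.2

end
end QuatSpAux

/- STATEMENT 13: For p ≥ 1 and nonzero reals a, b, the set {a·U + b·V : U, V ∈ Sp(p)} has
nonempty interior in M_p(ℍ), where Sp(p) = {U : U*U = 1} is the quaternionic unitary
group. -/

theorem quaternionic_unitary_sum_nonempty_interior
    (p : ℕ) (hp : 1 ≤ p) (a b : ℝ) (ha : a ≠ 0) (hb : b ≠ 0) :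
    (interior {Z : Matrix (Fin p) (Fin p) (Quaternion ℝ) |
        ∃ U V : Matrix (Fin p) (Fin p) (Quaternion ℝ),
          star U * U = 1 ∧ star V * V = 1 ∧ Z = a • U + b • V}).Nonempty :=
  QuatSpAux.aux p hp a b ha hb
end

section
/- Let n ≥ 3, let a, b, c ∈ ℝ with a ≠ 0, b ≠ 0, c ≠ b and c ≠ −b, and let Y ∈ M_n(ℝ) be the diagonal matrix with Y_{ii} = b for i = 1, …, n−1 and Y_{nn} = c. Then the set {a·k + u Y vᵀ : k, u, v ∈ SO(n)} has empty interior in M_n(ℝ). (This is the exceptional pair of types (SU(n), SU(n−1)) in the symmetric space SO_0(n,n)/SO(n)×SO(n), whose restricted root system is of type D_n: the corresponding convolution of orbital measures is singular.) -/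
/-!
Writing `u Y vᵀ = (u vᵀ) (v Y vᵀ)` and `v Y vᵀ = b + (c - b) y yᵀ` with `y` the last column of
`v`, every point of the set is `a k + w (b + (c - b) y yᵀ)` with `k, w` orthogonal and `y` a unit
vector. Countably many Cayley charts `A ↦ g (1 - A)(1 + A)⁻¹` (`A` skew, `n(n-1)/2` parameters)
cover `O(n)`, and one inverse stereographic chart reaches every `y yᵀ` (since `y yᵀ = (-y)(-y)ᵀ`).
So the set is a countable union of `C¹` images of `ℝ^(n² - 1)`, has Hausdorff dimension
`< n²`, and therefore empty interior.
-/

open Matrix Set Module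

attribute [local instance] Matrix.normedAddCommGroup Matrix.normedSpace

section MatrixCalculus

variable {E : Type*} [NormedAddCommGroup E] [NormedSpace ℝ E] {l m n : Type*}
  [Fintype l] [Fintype m] [Fintype n] {k : WithTop ℕ∞} {x : E}

theorem contDiffAt_matrix_iff {f : E → Matrix m n ℝ} :
    ContDiffAt ℝ k f x ↔ ∀ i j, ContDiffAt ℝ k (fun y => f y i j) x :=
  contDiffAt_pi.trans (forall_congr' fun _ => contDiffAt_pi)

theorem ContDiffAt.matrix_mul {f : E → Matrix l m ℝ} {g : E → Matrix m n ℝ}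
    (hf : ContDiffAt ℝ k f x) (hg : ContDiffAt ℝ k g x) :
    ContDiffAt ℝ k (fun y => f y * g y) x := by
  refine contDiffAt_matrix_iff.2 fun i j => ?_
  simp only [mul_apply]
  exact ContDiffAt.sum fun p _ =>
    (contDiffAt_matrix_iff.1 hf i p).mul (contDiffAt_matrix_iff.1 hg p j)

theorem ContDiffAt.matrix_det [DecidableEq n] {f : E → Matrix n n ℝ}
    (hf : ContDiffAt ℝ k f x) : ContDiffAt ℝ k (fun y => (f y).det) x := by
  simp only [det_apply, Units.smul_def, zsmul_eq_mul]
  exact ContDiffAt.sum fun σ _ => contDiffAt_const.mul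
    (contDiffAt_prod fun i _ => contDiffAt_matrix_iff.1 hf _ _)

theorem ContDiffAt.matrix_adjugate [DecidableEq n] {f : E → Matrix n n ℝ}
    (hf : ContDiffAt ℝ k f x) : ContDiffAt ℝ k (fun y => (f y).adjugate) x := by
  refine contDiffAt_matrix_iff.2 fun i j => ?_
  simp only [adjugate_apply]
  refine ContDiffAt.matrix_det (contDiffAt_matrix_iff.2 fun p q => ?_)
  simp only [updateRow_apply]
  split_ifs
  · exact contDiffAt_const
  · exact contDiffAt_matrix_iff.1 hf p q

theorem ContDiffAt.matrix_inv [DecidableEq n] {f : E → Matrix n n ℝ}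
    (hf : ContDiffAt ℝ k f x) (hx : (f x).det ≠ 0) : ContDiffAt ℝ k (fun y => (f y)⁻¹) x := by
  simp only [inv_def, Ring.inverse_eq_inv']
  exact (hf.matrix_det.inv hx).smul hf.matrix_adjugate

end MatrixCalculus

theorem interior_eq_empty_of_subset_biUnion_image {E F ι : Type*} [NormedAddCommGroup E]
    [NormedSpace ℝ E] [FiniteDimensional ℝ E] [NormedAddCommGroup F] [NormedSpace ℝ F]
    [FiniteDimensional ℝ F] {T : Set ι} (hT : T.Countable) {f : ι → E → F} {U : Set E}
    (hf : ∀ i, ∀ x ∈ U, ContDiffAt ℝ 1 (f i) x) (hEF : finrank ℝ E < finrank ℝ F) {s : Set F}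
    (hs : s ⊆ ⋃ i ∈ T, f i '' U) : interior s = ∅ := by
  rw [interior_eq_empty_iff_dense_compl]
  refine dense_compl_of_dimH_lt_finrank ((dimH_mono hs).trans_lt ?_)
  rw [dimH_bUnion hT]
  refine (iSup₂_le fun i _ => ?_).trans_lt (Nat.cast_lt.2 hEF)
  calc dimH (f i '' U) ≤ dimH U := dimH_image_le_of_locally_lipschitzOn fun x hx => by
        obtain ⟨K, t, ht, hK⟩ := (hf i x hx).exists_lipschitzOnWith
        exact ⟨K, t, mem_nhdsWithin_of_mem_nhds ht, hK⟩
    _ ≤ dimH (univ : Set E) := dimH_mono (subset_univ U)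
    _ = finrank ℝ E := Real.dimH_univ_eq_finrank E

section Cayley

variable {n : Type*} [Fintype n] [DecidableEq n]

noncomputable def cayley (A : Matrix n n ℝ) : Matrix n n ℝ := (1 - A) * (1 + A)⁻¹

theorem cayley_eq_iff {A u : Matrix n n ℝ} (hA : (1 + A).det ≠ 0) :
    cayley A = u ↔ 1 - A = u * (1 + A) := by
  have : Invertible (1 + A) := invertibleOfIsUnitDet _ (isUnit_iff_ne_zero.2 hA)
  exact mul_inv_eq_iff_eq_mul_of_invertible _ _ _

theorem ContDiffAt.cayley {E : Type*} [NormedAddCommGroup E] [NormedSpace ℝ E]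
    {k : WithTop ℕ∞} {x : E} {f : E → Matrix n n ℝ} (hf : ContDiffAt ℝ k f x)
    (hx : (1 + f x).det ≠ 0) : ContDiffAt ℝ k (fun y => cayley (f y)) x :=
  (contDiffAt_const.sub hf).matrix_mul ((contDiffAt_const.add hf).matrix_inv hx)

/-- The witness is `A = 2 (1 + u)⁻¹ - 1`; it is skew because `(1 + uᵀ)⁻¹ + (1 + u)⁻¹ = 1`. -/
theorem exists_skew_cayley_eq {u : Matrix n n ℝ} (hu : uᵀ * u = 1) (hdet : (1 + u).det ≠ 0) :
    ∃ A : Matrix n n ℝ, Aᵀ = -A ∧ (1 + A).det ≠ 0 ∧ cayley A = u := by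
  set B := 1 + u with hB
  have hBunit : IsUnit B.det := isUnit_iff_ne_zero.2 hdet
  have hBBt : B * Bᵀ = B + Bᵀ := by
    simp only [hB, transpose_add, transpose_one, mul_add, add_mul, Matrix.one_mul,
      Matrix.mul_one, mul_eq_one_comm.mp hu]
    abel
  have hinv_transpose : (Bᵀ)⁻¹ = 1 - B⁻¹ := by
    refine inv_eq_left_inv ?_
    have h : B⁻¹ * (B * Bᵀ) = B⁻¹ * (B + Bᵀ) := by rw [hBBt]
    rw [← Matrix.mul_assoc, nonsing_inv_mul _ hBunit, Matrix.one_mul, mul_add,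
      nonsing_inv_mul _ hBunit] at h
    rw [sub_mul, Matrix.one_mul, eq_sub_of_add_eq' h.symm]
    abel
  set A := (2 : ℝ) • B⁻¹ - 1
  have h1A : 1 + A = (2 : ℝ) • B⁻¹ := by module
  have hdetA : (1 + A).det ≠ 0 := by
    rw [h1A, det_smul, det_nonsing_inv, Ring.inverse_eq_inv']
    positivity
  refine ⟨A, ?_, hdetA, (cayley_eq_iff hdetA).2 ?_⟩
  · rw [transpose_sub, transpose_smul, transpose_nonsing_inv, hinv_transpose, transpose_one]
    module
  · rw [h1A, show u = B - 1 by rw [hB]; abel, sub_mul, Matrix.mul_smul,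
      mul_nonsing_inv _ hBunit, Matrix.one_mul]
    module

theorem isOpen_setOf_det_one_add_transpose_mul_ne_zero (g : Matrix n n ℝ) :
    IsOpen {w : Matrix n n ℝ | (1 + gᵀ * w).det ≠ 0} :=
  isOpen_ne_fun (by fun_prop) continuous_const

/-- The chart at `g` reaches every `w` with `det (1 + gᵀ w) ≠ 0`, in particular `w = g`;
by Lindelöf countably many `g` suffice. -/
theorem exists_countable_cayley_atlas :
    ∃ T : Set (Matrix n n ℝ), T.Countable ∧ ∀ w : Matrix n n ℝ, wᵀ * w = 1 →
      ∃ g ∈ T, ∃ A : Matrix n n ℝ, Aᵀ = -A ∧ (1 + A).det ≠ 0 ∧ g * cayley A = w := by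
  have : SecondCountableTopology (Matrix n n ℝ) :=
    inferInstanceAs (SecondCountableTopology (n → n → ℝ))
  obtain ⟨T, hT, hcover⟩ := TopologicalSpace.isOpen_iUnion_countable
    (fun g : {g : Matrix n n ℝ // gᵀ * g = 1} => {w | (1 + (g : Matrix n n ℝ)ᵀ * w).det ≠ 0})
    fun g => isOpen_setOf_det_one_add_transpose_mul_ne_zero g.1
  refine ⟨Subtype.val '' T, hT.image _, fun w hw => ?_⟩
  have hself : (1 + wᵀ * w).det ≠ 0 := by
    rw [hw, show (1 : Matrix n n ℝ) + 1 = (2 : ℝ) • 1 by module, det_smul, det_one]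
    positivity
  have hw_mem : w ∈ ⋃ g : {g : Matrix n n ℝ // gᵀ * g = 1},
      {w | (1 + (g : Matrix n n ℝ)ᵀ * w).det ≠ 0} := mem_iUnion.2 ⟨⟨w, hw⟩, hself⟩
  rw [← hcover] at hw_mem
  obtain ⟨⟨g, hg⟩, hgT, hdet⟩ := mem_iUnion₂.1 hw_mem
  have hgw : (gᵀ * w)ᵀ * (gᵀ * w) = 1 := by
    rw [transpose_mul, transpose_transpose, Matrix.mul_assoc, ← Matrix.mul_assoc g,
      mul_eq_one_comm.mp hg, Matrix.one_mul, hw]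
  obtain ⟨A, hskew, hA, hcayley⟩ := exists_skew_cayley_eq hgw hdet
  refine ⟨g, mem_image_of_mem _ hgT, A, hskew, hA, ?_⟩
  rw [hcayley, ← Matrix.mul_assoc, mul_eq_one_comm.mp hg, Matrix.one_mul]

end Cayley

section SkewCoords

variable {n : ℕ}

/-- Coordinates of a skew-symmetric matrix: its entries strictly below the diagonal. -/
abbrev SkewCoords (n : ℕ) : Type := Σ i : Fin n, Fin i

def skewOfCoords (x : SkewCoords n → ℝ) : Matrix (Fin n) (Fin n) ℝ :=
  of fun i j => if h : j < i then x ⟨i, ⟨j, h⟩⟩ else if h : i < j then -x ⟨j, ⟨i, h⟩⟩ else 0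

theorem card_skewCoords_mul_two : Fintype.card (SkewCoords n) * 2 = n * (n - 1) := by
  simp only [Fintype.card_sigma, Fintype.card_fin]
  rw [Fin.sum_univ_eq_sum_range (fun i => i) n, Finset.sum_range_id_mul_two]

theorem exists_skewOfCoords_eq {A : Matrix (Fin n) (Fin n) ℝ} (hA : Aᵀ = -A) :
    ∃ x, skewOfCoords x = A := by
  have hskew : ∀ i j, A j i = -A i j := fun i j => by simpa using congrFun (congrFun hA i) j
  refine ⟨fun p => A p.1 (Fin.castLT p.2 (p.2.isLt.trans p.1.isLt)), ?_⟩
  ext i j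
  simp only [skewOfCoords, of_apply]
  split_ifs with h h'
  · rfl
  · simp [hskew i j]
  · obtain rfl : i = j := le_antisymm (not_lt.1 h) (not_lt.1 h')
    linarith [hskew i i]

theorem contDiff_skewOfCoords {k : WithTop ℕ∞} : ContDiff ℝ k (skewOfCoords (n := n)) := by
  refine contDiff_pi.2 fun i => contDiff_pi.2 fun j => ?_
  simp only [skewOfCoords, of_apply]
  split_ifs
  · exact contDiff_apply _ _ _
  · exact (contDiff_apply _ _ _).neg
  · exact contDiff_const

end SkewCoords

section InvStereo

variable {m : ℕ}

/-- Inverse stereographic projection onto the unit sphere of `ℝ^(m+1)` from the last basis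
vector, which it misses. -/
noncomputable def invStereo (z : Fin m → ℝ) : Fin (m + 1) → ℝ :=
  (1 + z ⬝ᵥ z)⁻¹ • Fin.snoc (2 • z) (z ⬝ᵥ z - 1)

theorem contDiff_invStereo {k : WithTop ℕ∞} : ContDiff ℝ k (invStereo (m := m)) := by
  have hq : ContDiff ℝ k fun z : Fin m → ℝ => z ⬝ᵥ z := by
    simp only [dotProduct]
    fun_prop
  have hpos (z : Fin m → ℝ) : 1 + z ⬝ᵥ z ≠ 0 := by
    simpa using (add_pos_of_pos_of_nonneg one_pos (dotProduct_self_star_nonneg z)).ne'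
  refine ((contDiff_const.add hq).inv hpos).smul (contDiff_pi.2 fun i => ?_)
  induction i using Fin.lastCases with
  | last => simpa using hq.sub contDiff_const
  | cast i => simpa using (contDiff_apply ℝ ℝ i).const_smul (2 : ℕ)

theorem exists_invStereo_eq {y : Fin (m + 1) → ℝ} (hy : y ⬝ᵥ y = 1)
    (hl : y (Fin.last m) ≠ 1) : ∃ z, invStereo z = y := by
  set t := y (Fin.last m)
  have h1t : 1 - t ≠ 0 := sub_ne_zero.2 (Ne.symm hl)
  have hinit : Fin.init y ⬝ᵥ Fin.init y = 1 - t ^ 2 := by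
    rw [dotProduct, Fin.sum_univ_castSucc] at hy
    simp only [dotProduct, Fin.init]
    linarith
  set z := (1 - t)⁻¹ • Fin.init y
  have hq : z ⬝ᵥ z = (1 + t) / (1 - t) := by
    simp only [z, smul_dotProduct, dotProduct_smul, hinit, smul_eq_mul]
    field_simp
    ring
  refine ⟨z, funext fun i => ?_⟩
  induction i using Fin.lastCases with
  | last => simp [invStereo, hq]; field_simp; ring
  | cast i => simp [invStereo, hq, z, Fin.init]; field_simp; ring

theorem exists_vecMulVec_invStereo_eq {y : Fin (m + 1) → ℝ} (hy : y ⬝ᵥ y = 1) :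
    ∃ z, vecMulVec (invStereo z) (invStereo z) = vecMulVec y y := by
  by_cases hl : y (Fin.last m) = 1
  · obtain ⟨z, hz⟩ := exists_invStereo_eq (y := -y) (by simpa using hy) (by simp [hl]; norm_num)
    exact ⟨z, by rw [hz, neg_vecMulVec, vecMulVec_neg, neg_neg]⟩
  · obtain ⟨z, hz⟩ := exists_invStereo_eq hy hl
    exact ⟨z, by rw [hz]⟩

end InvStereo

theorem col_dotProduct_col_self {n : Type*} [Fintype n] [DecidableEq n] {v : Matrix n n ℝ}
    (hv : vᵀ * v = 1) (j : n) : v.col j ⬝ᵥ v.col j = 1 := by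
  simpa [mul_apply, dotProduct] using congrFun (congrFun hv j) j

theorem mul_diagonal_mul_transpose_eq {m : ℕ} (b c : ℝ)
    {v : Matrix (Fin (m + 1)) (Fin (m + 1)) ℝ} (hv : v * vᵀ = 1) :
    v * diagonal (fun i : Fin (m + 1) => if (i : ℕ) < m then b else c) * vᵀ
      = b • 1 + (c - b) • vecMulVec (v.col (Fin.last m)) (v.col (Fin.last m)) := by
  have hY : diagonal (fun i : Fin (m + 1) => if (i : ℕ) < m then b else c)
      = b • 1 + (c - b) • vecMulVec (Pi.single (Fin.last m) 1) (Pi.single (Fin.last m) 1) := by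
    ext i j
    induction i using Fin.lastCases <;> induction j using Fin.lastCases <;>
      simp [diagonal_apply, one_apply, vecMulVec_apply, Fin.castSucc_ne_last,
        (Fin.castSucc_ne_last _).symm]
  rw [hY, mul_add, add_mul, Matrix.mul_smul, Matrix.smul_mul, Matrix.mul_one, hv,
    Matrix.mul_smul, Matrix.smul_mul, mul_vecMulVec, vecMulVec_mul, vecMul_transpose,
    mulVec_single_one]

section OrbitChart

variable {m : ℕ}

abbrev OrbitChartDomain (m : ℕ) : Type :=
  (SkewCoords (m + 1) → ℝ) × (SkewCoords (m + 1) → ℝ) × (Fin m → ℝ)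

noncomputable def orbitChart (a b c : ℝ)
    (g : Matrix (Fin (m + 1)) (Fin (m + 1)) ℝ × Matrix (Fin (m + 1)) (Fin (m + 1)) ℝ)
    (p : OrbitChartDomain m) : Matrix (Fin (m + 1)) (Fin (m + 1)) ℝ :=
  a • (g.1 * cayley (skewOfCoords p.1)) + g.2 * cayley (skewOfCoords p.2.1) *
    (b • 1 + (c - b) • vecMulVec (invStereo p.2.2) (invStereo p.2.2))

def orbitChartSource (m : ℕ) : Set (OrbitChartDomain m) :=
  {p | (1 + skewOfCoords p.1).det ≠ 0 ∧ (1 + skewOfCoords p.2.1).det ≠ 0}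

theorem contDiffAt_orbitChart (a b c : ℝ)
    (g : Matrix (Fin (m + 1)) (Fin (m + 1)) ℝ × Matrix (Fin (m + 1)) (Fin (m + 1)) ℝ)
    {p : OrbitChartDomain m} (hp : p ∈ orbitChartSource m) :
    ContDiffAt ℝ 1 (orbitChart a b c g) p := by
  have h₁ : ContDiffAt ℝ 1 (fun q : OrbitChartDomain m => cayley (skewOfCoords q.1)) p :=
    (contDiff_skewOfCoords.comp contDiff_fst).contDiffAt.cayley hp.1
  have h₂ : ContDiffAt ℝ 1 (fun q : OrbitChartDomain m => cayley (skewOfCoords q.2.1)) p :=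
    (contDiff_skewOfCoords.comp (contDiff_fst.comp contDiff_snd)).contDiffAt.cayley hp.2
  have hy : ContDiff ℝ 1 fun q : OrbitChartDomain m => invStereo q.2.2 :=
    contDiff_invStereo.comp (contDiff_snd.comp contDiff_snd)
  have hyy : ContDiffAt ℝ 1 (fun q : OrbitChartDomain m =>
      vecMulVec (invStereo q.2.2) (invStereo q.2.2)) p := by
    refine contDiffAt_matrix_iff.2 fun i j => ?_
    simp only [vecMulVec_apply]
    exact ((contDiff_apply ℝ ℝ i).comp hy).contDiffAt.mul
      ((contDiff_apply ℝ ℝ j).comp hy).contDiffAt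
  exact ((contDiffAt_const.matrix_mul h₁).const_smul a).add
    ((contDiffAt_const.matrix_mul h₂).matrix_mul (contDiffAt_const.add (hyy.const_smul _)))

theorem finrank_orbitChartDomain_lt :
    finrank ℝ (OrbitChartDomain m) < finrank ℝ (Matrix (Fin (m + 1)) (Fin (m + 1)) ℝ) := by
  have hcard := card_skewCoords_mul_two (n := m + 1)
  simp only [finrank_prod, finrank_fintype_fun_eq_card, Fintype.card_fin, finrank_matrix,
    finrank_self, Nat.add_sub_cancel] at *
  nlinarith

theorem interior_setOf_smul_add_mul_rankOne_eq_empty (a b c : ℝ) :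
    interior {Z : Matrix (Fin (m + 1)) (Fin (m + 1)) ℝ | ∃ k w y, kᵀ * k = 1 ∧ wᵀ * w = 1 ∧
      y ⬝ᵥ y = 1 ∧ Z = a • k + w * (b • 1 + (c - b) • vecMulVec y y)} = ∅ := by
  obtain ⟨T, hT, hatlas⟩ := exists_countable_cayley_atlas (n := Fin (m + 1))
  refine interior_eq_empty_of_subset_biUnion_image (hT.prod hT)
    (fun g _ => contDiffAt_orbitChart a b c g) finrank_orbitChartDomain_lt ?_
  rintro _ ⟨k, w, y, hk, hw, hy, rfl⟩
  obtain ⟨g₁, hg₁, A₁, hA₁, hdet₁, rfl⟩ := hatlas k hk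
  obtain ⟨g₂, hg₂, A₂, hA₂, hdet₂, rfl⟩ := hatlas w hw
  obtain ⟨x₁, rfl⟩ := exists_skewOfCoords_eq hA₁
  obtain ⟨x₂, rfl⟩ := exists_skewOfCoords_eq hA₂
  obtain ⟨z, hz⟩ := exists_vecMulVec_invStereo_eq hy
  exact mem_biUnion (x := (g₁, g₂)) ⟨hg₁, hg₂⟩
    ⟨(x₁, x₂, z), ⟨hdet₁, hdet₂⟩, by simp [orbitChart, hz]⟩

end OrbitChart

theorem exceptional_pair_SUn_SUn1_empty_interior_general
    (n : ℕ) (hn : 3 ≤ n) (a b c : ℝ)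
    (Y : Matrix (Fin n) (Fin n) ℝ)
    (hY : Y = Matrix.diagonal fun i : Fin n => if (i : ℕ) < n - 1 then b else c) :
    interior {Z : Matrix (Fin n) (Fin n) ℝ |
        ∃ k u v : Matrix (Fin n) (Fin n) ℝ,
          kᵀ * k = 1 ∧ k.det = 1 ∧ uᵀ * u = 1 ∧ u.det = 1 ∧ vᵀ * v = 1 ∧ v.det = 1 ∧
          Z = a • k + u * Y * vᵀ} = ∅ := by
  obtain ⟨m, rfl⟩ : ∃ m, n = m + 1 := ⟨n - 1, by omega⟩
  rw [Nat.add_sub_cancel] at hY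
  refine subset_empty_iff.1 <|
    interior_setOf_smul_add_mul_rankOne_eq_empty (m := m) a b c ▸ interior_mono ?_
  rintro _ ⟨k, u, v, hk, -, hu, -, hv, -, rfl⟩
  have hvvt : v * vᵀ = 1 := mul_eq_one_comm.mp hv
  refine ⟨k, u * vᵀ, v.col (Fin.last m), hk, ?_, col_dotProduct_col_self hv _, ?_⟩
  · rw [transpose_mul, transpose_transpose, Matrix.mul_assoc, ← Matrix.mul_assoc uᵀ, hu,
      Matrix.one_mul, hvvt]
  · rw [← mul_diagonal_mul_transpose_eq b c hvvt, ← hY]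
    simp only [Matrix.mul_assoc, ← Matrix.mul_assoc vᵀ v, hv, Matrix.one_mul]

theorem exceptional_pair_SUn_SUn1_empty_interior
    (n : ℕ) (hn : 3 ≤ n) (a b c : ℝ) (ha : a ≠ 0) (hb : b ≠ 0)
    (hcb : c ≠ b) (hcb' : c ≠ -b)
    (Y : Matrix (Fin n) (Fin n) ℝ)
    (hY : Y = Matrix.diagonal fun i : Fin n => if (i : ℕ) < n - 1 then b else c) :
    interior {Z : Matrix (Fin n) (Fin n) ℝ |
        ∃ k u v : Matrix (Fin n) (Fin n) ℝ,
          kᵀ * k = 1 ∧ k.det = 1 ∧ uᵀ * u = 1 ∧ u.det = 1 ∧ vᵀ * v = 1 ∧ v.det = 1 ∧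
          Z = a • k + u * Y * vᵀ} = ∅ :=
  exceptional_pair_SUn_SUn1_empty_interior_general n hn a b c Y hY
end

section
/- Let n ≥ 3 and let a, b be nonzero real numbers. Then the set {a·k + b·h : k, h ∈ O(n)} has empty interior in M_n(ℝ). (This is the exceptional pair of types (SU(n), SU(n)) in the symmetric space SO_0(n,n)/SO(n)×SO(n), whose restricted root system is of type D_n: the orbits of elements of type SU(n) are a·SO(n) and a·{w ∈ O(n) : det w = −1}, and any sum of two such orbits has empty interior.) -/
/-!
For `Z = a • k + b • h` with `k, h` orthogonal, `ZᵀZ = (a² + b²) • 1 + ab • (W + Wᵀ)` where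
`W = kᵀh` is orthogonal, hence commutes with `ZᵀZ`. If `ZᵀZ` had simple spectrum, `W` would be
diagonal with entries `±1` in an eigenbasis of `ZᵀZ`, so `ZᵀZ` would have at most two
eigenvalues; for `n ≥ 3` the spectrum of `ZᵀZ` therefore always has a repeated eigenvalue.
So the discriminant of the characteristic polynomial of `ZᵀZ` vanishes on the whole set. It is
a polynomial function of `Z`, nonzero at `Z = diagonal (0, 1, …, n - 1)`, and a polynomial on a
line vanishing near a point vanishes everywhere on the line; hence the set has empty interior.
-/

open Matrix Polynomial Topology

namespace Matrix

variable {ι R : Type*} [Fintype ι] [DecidableEq ι] [CommRing R]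

theorem isDiag_of_commute_diagonal [IsDomain R] {B : Matrix ι ι R} {d : ι → R}
    (hd : Function.Injective d) (h : Commute B (diagonal d)) : B.IsDiag := by
  intro i j hij
  have hij' := congr_fun₂ h.eq i j
  rw [mul_diagonal, diagonal_mul] at hij'
  have hmul : (d j - d i) * B i j = 0 := by linear_combination hij'
  exact (mul_eq_zero.mp hmul).resolve_left (sub_ne_zero.mpr (hd.ne (Ne.symm hij)))

theorem IsDiag.apply_self_mul_self_eq_one {B : Matrix ι ι R} (hB : B.IsDiag)
    (hBB : Bᵀ * B = 1) (i : ι) : B i i * B i i = 1 := by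
  rw [← hB.diagonal_diag, diagonal_transpose, diagonal_mul_diagonal] at hBB
  simpa using congr_fun₂ hBB i i

theorem eq_add_two_mul_or_eq_sub_two_mul_of_diagonal_eq [IsDomain R]
    {B : Matrix ι ι R} {d : ι → R} (hd : Function.Injective d) (hB : Bᵀ * B = 1) {c e : R}
    (h : diagonal d = c • 1 + e • (B + Bᵀ)) (i : ι) :
    d i = c + 2 * e ∨ d i = c - 2 * e := by
  have hBB' : B * Bᵀ = 1 := mul_eq_one_comm.mp hB
  have hcomm : Commute B (diagonal d) := by
    rw [h]
    refine ((Commute.one_right B).smul_right c).add_right (Commute.smul_right ?_ e)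
    simp only [commute_iff_eq, Matrix.mul_add, Matrix.add_mul, hB, hBB']
  have hBii := (isDiag_of_commute_diagonal hd hcomm).apply_self_mul_self_eq_one hB i
  have hdi : d i = c + 2 * e * B i i := by
    simpa [two_mul, add_mul] using congr_fun₂ h i i
  rcases mul_self_eq_one_iff.mp hBii with h1 | h1
  · left; rw [hdi, h1, mul_one]
  · right; rw [hdi, h1]; ring

theorem transpose_mul_transpose_mul_eq_one {k h : Matrix ι ι R} (hk : kᵀ * k = 1)
    (hh : hᵀ * h = 1) : (kᵀ * h)ᵀ * (kᵀ * h) = 1 := by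
  rw [transpose_mul, transpose_transpose, Matrix.mul_assoc, ← Matrix.mul_assoc k,
    mul_eq_one_comm.mp hk, Matrix.one_mul, hh]

theorem transpose_smul_add_smul_mul_self {k h : Matrix ι ι R} (hk : kᵀ * k = 1)
    (hh : hᵀ * h = 1) (a b : R) :
    (a • k + b • h)ᵀ * (a • k + b • h) =
      (a ^ 2 + b ^ 2) • 1 + (a * b) • (kᵀ * h + (kᵀ * h)ᵀ) := by
  simp only [transpose_add, transpose_smul, transpose_mul, transpose_transpose, Matrix.add_mul,
    Matrix.mul_add, Matrix.smul_mul, Matrix.mul_smul, hk, hh]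
  module

open Unitary in
theorem IsHermitian.not_injective_eigenvalues_of_eq_smul_one_add_smul_add_transpose
    {A W : Matrix ι ι ℝ} (hA : A.IsHermitian) (hW : Wᵀ * W = 1) {c e : ℝ}
    (hAW : A = c • 1 + e • (W + Wᵀ)) (hι : 2 < Fintype.card ι) :
    ¬ Function.Injective hA.eigenvalues := by
  intro hinj
  set φ := conjStarAlgAut ℝ _ (star hA.eigenvectorUnitary)
  have htr : ∀ M : Matrix ι ι ℝ, Mᵀ = star M :=
    fun M => (conjTranspose_eq_transpose_of_trivial M).symm
  have hdiag : diagonal hA.eigenvalues = c • 1 + e • (φ W + (φ W)ᵀ) := by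
    have hdiagonalize := hA.conjStarAlgAut_star_eigenvectorUnitary
    simp only [RCLike.ofReal_real_eq_id, Function.id_comp] at hdiagonalize
    rw [← hdiagonalize]
    change φ A = _
    rw [hAW, htr, htr]
    simp only [map_add, map_smul, map_one, map_star]
  have hφW : (φ W)ᵀ * φ W = 1 := by
    rw [htr, ← map_star, ← map_mul, ← htr, hW, map_one]
  obtain ⟨i, -, j, -, hij, heq⟩ := Finset.exists_ne_map_eq_of_card_lt_of_maps_to
    (t := {c + 2 * e, c - 2 * e}) (s := Finset.univ)
    (Finset.card_le_two.trans_lt hι) fun i _ => by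
      simpa using eq_add_two_mul_or_eq_sub_two_mul_of_diagonal_eq hinj hφW hdiag i
  exact hij (hinj heq)

section traceHankel

variable {n : ℕ}

/-- `det (traceHankel A)` is the discriminant of the characteristic polynomial of `A`. -/
def traceHankel (A : Matrix (Fin n) (Fin n) R) : Matrix (Fin n) (Fin n) R :=
  of fun i j => trace (A ^ (i + j : ℕ))

theorem traceHankel_diagonal (d : Fin n → R) :
    traceHankel (diagonal d) = (vandermonde d)ᵀ * vandermonde d := by
  ext i j
  simp [traceHankel, vandermonde_transpose_mul_vandermonde, diagonal_pow, trace_diagonal]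

open Unitary in
theorem traceHankel_conjStarAlgAut [StarRing R] (u : unitary (Matrix (Fin n) (Fin n) R))
    (A : Matrix (Fin n) (Fin n) R) :
    traceHankel (conjStarAlgAut R _ u A) = traceHankel A := by
  ext i j
  rw [traceHankel, traceHankel, of_apply, of_apply, ← map_pow, conjStarAlgAut_apply,
    trace_mul_cycle, Unitary.coe_star_mul_self, Matrix.one_mul]

theorem _root_.RingHom.map_det_traceHankel {S : Type*} [CommRing S] (f : R →+* S)
    (A : Matrix (Fin n) (Fin n) R) :
    f (traceHankel A).det = (traceHankel (f.mapMatrix A)).det := by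
  rw [RingHom.map_det]
  congr 1
  ext i j
  simp only [RingHom.mapMatrix_apply, map_apply, traceHankel, of_apply, AddMonoidHom.map_trace]
  exact congrArg trace (map_pow f.mapMatrix A _)

theorem IsHermitian.det_traceHankel_eq_zero {A : Matrix (Fin n) (Fin n) ℝ} (hA : A.IsHermitian)
    (hinj : ¬ Function.Injective hA.eigenvalues) : (traceHankel A).det = 0 := by
  have hspec := hA.spectral_theorem
  simp only [RCLike.ofReal_real_eq_id, Function.id_comp] at hspec
  rw [hspec, traceHankel_conjStarAlgAut, traceHankel_diagonal, det_mul, det_transpose,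
    det_vandermonde_eq_zero_iff.mpr (Function.not_injective_iff.mp hinj), mul_zero]

theorem exists_polynomial_eval_eq_det_traceHankel_line (Z₀ Z₁ : Matrix (Fin n) (Fin n) R) :
    ∃ p : R[X], ∀ t : R,
      p.eval t = (traceHankel ((Z₀ + t • Z₁)ᵀ * (Z₀ + t • Z₁))).det := by
  let P : Matrix (Fin n) (Fin n) R[X] := Z₀.map C + (X : R[X]) • Z₁.map C
  refine ⟨(traceHankel (Pᵀ * P)).det, fun t => ?_⟩
  have hP : (evalRingHom t).mapMatrix P = Z₀ + t • Z₁ := by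
    ext i j
    simp only [P, RingHom.mapMatrix_apply, map_apply, add_apply, smul_apply, smul_eq_mul,
      coe_evalRingHom, eval_add, eval_mul, eval_C, eval_X]
  have hPT : (evalRingHom t).mapMatrix Pᵀ = (Z₀ + t • Z₁)ᵀ := by
    rw [RingHom.mapMatrix_apply, transpose_map, ← RingHom.mapMatrix_apply, hP]
  rw [← coe_evalRingHom, RingHom.map_det_traceHankel, map_mul, hP, hPT]

theorem interior_eq_empty_of_det_traceHankel_eq_zero {S : Set (Matrix (Fin n) (Fin n) ℝ)}
    (hS : ∀ Z ∈ S, (traceHankel (Zᵀ * Z)).det = 0) : interior S = ∅ := by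
  refine Set.eq_empty_of_forall_notMem fun Z₀ hZ₀ => ?_
  set Z₁ : Matrix (Fin n) (Fin n) ℝ := diagonal fun i => (i : ℝ)
  obtain ⟨p, hp⟩ := exists_polynomial_eval_eq_det_traceHankel_line Z₀ (Z₁ - Z₀)
  have hline : ∀ᶠ t in 𝓝 (0 : ℝ), Z₀ + t • (Z₁ - Z₀) ∈ S := by
    have hcont : Continuous fun t : ℝ => Z₀ + t • (Z₁ - Z₀) := by fun_prop
    exact hcont.tendsto' 0 Z₀ (by simp) |>.eventually (mem_interior_iff_mem_nhds.mp hZ₀)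
  have hp0 : p = 0 := p.eq_zero_of_infinite_isRoot <| infinite_of_mem_nhds 0 <|
    hline.mono fun t ht => (hp t).trans (hS _ ht)
  have hZ₁ : Z₁ᵀ * Z₁ = diagonal fun i : Fin n => (((i : ℕ) * i : ℕ) : ℝ) := by
    simp [Z₁, diagonal_transpose, diagonal_mul_diagonal]
  have hinj : Function.Injective fun i : Fin n => (((i : ℕ) * i : ℕ) : ℝ) :=
    fun i j hij => Fin.ext (Nat.mul_self_inj.mp (Nat.cast_injective hij))
  have hZ₁det := hp 1
  rw [hp0, one_smul, add_sub_cancel, eval_zero, hZ₁, traceHankel_diagonal, det_mul,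
    det_transpose] at hZ₁det
  exact mul_self_ne_zero.mpr (det_vandermonde_ne_zero_iff.mpr hinj) hZ₁det.symm

end traceHankel

end Matrix

theorem exceptional_pair_SUn_SUn_empty_interior_general
    (n : ℕ) (hn : 3 ≤ n) (a b : ℝ) :
    interior {Z : Matrix (Fin n) (Fin n) ℝ |
        ∃ k h : Matrix (Fin n) (Fin n) ℝ,
          kᵀ * k = 1 ∧ hᵀ * h = 1 ∧ Z = a • k + b • h} = ∅ := by
  refine interior_eq_empty_of_det_traceHankel_eq_zero ?_
  rintro _ ⟨k, h, hk, hh, rfl⟩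
  have hA : ((a • k + b • h)ᵀ * (a • k + b • h)).IsHermitian := by
    simpa using isSymm_transpose_mul_self (a • k + b • h)
  exact hA.det_traceHankel_eq_zero <|
    hA.not_injective_eigenvalues_of_eq_smul_one_add_smul_add_transpose
      (transpose_mul_transpose_mul_eq_one hk hh) (transpose_smul_add_smul_mul_self hk hh a b)
      (by rwa [Fintype.card_fin])

theorem exceptional_pair_SUn_SUn_empty_interior
    (n : ℕ) (hn : 3 ≤ n) (a b : ℝ) (ha : a ≠ 0) (hb : b ≠ 0) :
    interior {Z : Matrix (Fin n) (Fin n) ℝ |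
        ∃ k h : Matrix (Fin n) (Fin n) ℝ,
          kᵀ * k = 1 ∧ hᵀ * h = 1 ∧ Z = a • k + b • h} = ∅ :=
  exceptional_pair_SUn_SUn_empty_interior_general n hn a b
end

section
/- Let n ∈ {3,4} and let a, b, c be nonzero real numbers. Then the set {a·k_1 + b·k_2 + c·k_3 : k_1, k_2, k_3 ∈ SO(n)} has empty interior in M_n(ℝ). (This is the exceptional triple of elements all of type SU(n), with Weyl conjugate sets of annihilating roots when n = 4, in the symmetric space SO_0(n,n)/SO(n)×SO(n) with restricted root system of type D_n.) -/
/-!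
Identify `ℝ⁴` with the quaternions. By Cartan–Dieudonné every element of `SO(4)` is a product of
reflections `x ↦ -a x̄ a / |a|²`; maps of the forms `x ↦ p x q` and `x ↦ p x̄ q` are closed under
composition and the latter have determinant `≤ 0`, so every element of `SO(4)` is `x ↦ p x q`. In
the basis `x ↦ eᵢ x eⱼ` of `M₄(ℝ)` (`eᵢ = 1, i, j, k`) this map has the rank-one coordinate matrix
`p qᵀ`, so the coordinate matrix of `a k₁ + b k₂ + c k₃` has rank at most `3`. Its determinant is a
polynomial that is nonzero on every line in a direction with invertible coordinate matrix, so the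
set meets each such line in finitely many points and has empty interior. For `SO(3)` apply this to
`diag(a + b + c, a k₁ + b k₂ + c k₃) = a diag(1, k₁) + b diag(1, k₂) + c diag(1, k₃)`.
-/

open Matrix

namespace Matrix

variable {n : Type*} [Fintype n] [DecidableEq n]

-- Also for `v = 0`, where `(ℝ ∙ 0)ᗮ = ⊤` and `2 / 0 = 0`.
lemma toEuclideanCLM_symm_reflection (v : EuclideanSpace ℝ n) :
    (toEuclideanCLM (n := n) (𝕜 := ℝ)).symm ((ℝ ∙ v)ᗮ.reflection :
        EuclideanSpace ℝ n →L[ℝ] EuclideanSpace ℝ n) =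
      1 - (2 / (v.ofLp ⬝ᵥ v.ofLp)) • vecMulVec v.ofLp v.ofLp := by
  rw [StarAlgEquiv.symm_apply_eq]
  ext x i
  simp [Submodule.reflection_orthogonal_apply, Submodule.reflection_singleton_apply,
    vecMulVec_mulVec, EuclideanSpace.norm_eq, PiLp.inner_apply, dotProduct]
  rw [Real.sq_sqrt (by positivity)]
  simp only [sq, mul_comm (x.ofLp _)]
  ring

-- Cartan–Dieudonné, transported from linear isometries of `EuclideanSpace ℝ n` to matrices.
theorem orthogonalGroup_le_of_householder_mem (G : Submonoid (Matrix n n ℝ))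
    (hG : ∀ v : n → ℝ, 1 - (2 / (v ⬝ᵥ v)) • vecMulVec v v ∈ G) :
    orthogonalGroup n ℝ ≤ G := by
  intro k hk
  let toMatrix : (EuclideanSpace ℝ n ≃ₗᵢ[ℝ] EuclideanSpace ℝ n) →* Matrix n n ℝ :=
    (MonoidHomClass.toMonoidHom (toEuclideanCLM (n := n) (𝕜 := ℝ)).symm).comp
      ((unitary _).subtype.comp Unitary.linearIsometryEquiv.symm.toMonoidHom)
  let φ := Unitary.linearIsometryEquiv ⟨toEuclideanCLM (n := n) (𝕜 := ℝ) k, Unitary.map_mem _ hk⟩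
  obtain ⟨l, -, hl⟩ := φ.reflections_generate_dim
  have hφ : toMatrix φ = k := by simp [toMatrix, φ]
  rw [← hφ, hl, map_list_prod, List.map_map]
  refine G.list_prod_mem fun M hM => ?_
  obtain ⟨v, -, rfl⟩ := List.mem_map.mp hM
  simpa [toMatrix, toEuclideanCLM_symm_reflection] using hG v.ofLp

theorem det_sum_vecMulVec_eq_zero {K ι : Type*} [Field K] [Fintype ι] (u w : ι → n → K)
    (h : Fintype.card ι < Fintype.card n) : (∑ s, vecMulVec (u s) (w s)).det = 0 := by
  set U : Matrix n ι K := of fun i s => u s i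
  have hUV : ∑ s, vecMulVec (u s) (w s) = U * of fun s j => w s j := by
    ext i j
    simp [U, mul_apply, vecMulVec_apply, sum_apply]
  by_contra hdet
  have h_full := rank_of_isUnit _ ((isUnit_iff_isUnit_det _).mpr (Ne.isUnit hdet))
  have h_mul := rank_mul_le_left U (of fun s j => w s j)
  have h_width := rank_le_card_width U
  rw [← hUV] at h_mul
  omega

theorem finite_setOf_det_add_smul_eq_zero {K : Type*} [Field K] (A B : Matrix n n K)
    (hB : B.det ≠ 0) : {t : K | (A + t • B).det = 0}.Finite := by
  have hdet (t : K) : (A + t • B).det = B.det * (-(B⁻¹ * A)).charpoly.eval t := by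
    rw [eval_charpoly, sub_neg_eq_add, ← det_mul, mul_add,
      mul_nonsing_inv_cancel_left B A hB.isUnit, scalar_apply, ← smul_one_eq_diagonal,
      Matrix.mul_smul, mul_one, add_comm]
  refine (Polynomial.finite_setOfPred_isRoot (charpoly_monic (-(B⁻¹ * A))).ne_zero).subset
    fun t ht => ?_
  simpa [hdet, hB] using ht

end Matrix

noncomputable def scalarBlockDiag :
    ℝ × Matrix (Fin 3) (Fin 3) ℝ →ₗ[ℝ] Matrix (Fin 4) (Fin 4) ℝ where
  toFun x := reindexLinearEquiv ℝ ℝ finSumFinEquiv finSumFinEquiv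
    (fromBlocks (x.1 • 1 : Matrix (Fin 1) (Fin 1) ℝ) 0 0 x.2)
  map_add' x y := by rw [← map_add, fromBlocks_add]; simp [add_smul]
  map_smul' c x := by rw [RingHom.id_apply, ← map_smul, fromBlocks_smul]; simp [smul_smul]

lemma scalarBlockDiag_one_mem {k : Matrix (Fin 3) (Fin 3) ℝ}
    (hk : k ∈ specialOrthogonalGroup (Fin 3) ℝ) :
    scalarBlockDiag (1, k) ∈ specialOrthogonalGroup (Fin 4) ℝ := by
  rw [mem_specialOrthogonalGroup_iff, mem_orthogonalGroup_iff'] at hk ⊢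
  simp [scalarBlockDiag, fromBlocks_transpose, fromBlocks_multiply, hk.1, hk.2,
    det_fromBlocks_zero₂₁]

lemma scalarBlockDiag_zero_one : scalarBlockDiag (0, 1) = diagonal ![0, 1, 1, 1] := by
  ext i j
  fin_cases i <;> fin_cases j <;>
    simp [scalarBlockDiag, finSumFinEquiv, Fin.addCases, fromBlocks, one_apply, Fin.subNat]

theorem interior_eq_empty_of_forall_countable_line {E : Type*} [AddCommGroup E] [Module ℝ E]
    [TopologicalSpace E] [ContinuousAdd E] [ContinuousSMul ℝ E] {S : Set E} (w : E)
    (hS : ∀ z, {t : ℝ | z + t • w ∈ S}.Countable) : interior S = ∅ := by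
  refine Set.eq_empty_of_forall_notMem fun z hz => ?_
  have hsub : (fun t : ℝ => z + t • w) ⁻¹' interior S ⊆ interior {t : ℝ | z + t • w ∈ S} :=
    interior_maximal (fun _ ht => interior_subset (s := S) ht)
      (isOpen_interior.preimage (by fun_prop))
  rw [interior_eq_empty_iff_dense_compl.mpr ((hS z).dense_compl ℝ)] at hsub
  exact hsub (show z + (0 : ℝ) • w ∈ interior S by simpa using hz)

theorem interior_eq_empty_of_det_eq_zero {E n : Type*} [AddCommGroup E] [Module ℝ E]
    [TopologicalSpace E] [ContinuousAdd E] [ContinuousSMul ℝ E] [Fintype n] [DecidableEq n]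
    {S : Set E} (f : E → Matrix n n ℝ) (w : E) (B : Matrix n n ℝ) (hB : B.det ≠ 0)
    (hf : ∀ z (t : ℝ), f (z + t • w) = f z + t • B) (hS : ∀ z ∈ S, (f z).det = 0) :
    interior S = ∅ :=
  interior_eq_empty_of_forall_countable_line w fun z =>
    ((finite_setOf_det_add_smul_eq_zero (f z) B hB).subset fun t ht => by
      simpa [hf] using hS _ ht).countable

namespace Quaternion

-- The matrices of `x ↦ p * x`, `x ↦ x * q` and `star` in the coordinates `equivTuple ℝ x`.
def leftMulMatrix (p : ℍ[ℝ]) : Matrix (Fin 4) (Fin 4) ℝ :=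
  !![p.re, -p.imI, -p.imJ, -p.imK;
     p.imI, p.re, -p.imK, p.imJ;
     p.imJ, p.imK, p.re, -p.imI;
     p.imK, -p.imJ, p.imI, p.re]

def rightMulMatrix (q : ℍ[ℝ]) : Matrix (Fin 4) (Fin 4) ℝ :=
  !![q.re, -q.imI, -q.imJ, -q.imK;
     q.imI, q.re, q.imK, -q.imJ;
     q.imJ, -q.imK, q.re, q.imI;
     q.imK, q.imJ, -q.imI, q.re]

def starMatrix : Matrix (Fin 4) (Fin 4) ℝ := diagonal ![1, -1, -1, -1]

def leftRightMulMatrix (p q : ℍ[ℝ]) : Matrix (Fin 4) (Fin 4) ℝ :=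
  leftMulMatrix p * rightMulMatrix q

lemma leftMulMatrix_one : leftMulMatrix 1 = 1 := by
  ext i j
  fin_cases i <;> fin_cases j <;> simp [leftMulMatrix, one_apply]

lemma rightMulMatrix_one : rightMulMatrix 1 = 1 := by
  ext i j
  fin_cases i <;> fin_cases j <;> simp [rightMulMatrix, one_apply]

lemma leftMulMatrix_smul (c : ℝ) (p : ℍ[ℝ]) : leftMulMatrix (c • p) = c • leftMulMatrix p := by
  ext i j
  fin_cases i <;> fin_cases j <;> simp [leftMulMatrix]

lemma leftMulMatrix_mul (p p' : ℍ[ℝ]) :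
    leftMulMatrix (p * p') = leftMulMatrix p * leftMulMatrix p' := by
  ext i j
  fin_cases i <;> fin_cases j <;> simp [leftMulMatrix, mul_apply, Fin.sum_univ_four] <;> ring

lemma rightMulMatrix_mul (q q' : ℍ[ℝ]) :
    rightMulMatrix (q * q') = rightMulMatrix q' * rightMulMatrix q := by
  ext i j
  fin_cases i <;> fin_cases j <;> simp [rightMulMatrix, mul_apply, Fin.sum_univ_four] <;> ring

lemma commute_leftMulMatrix_rightMulMatrix (p q : ℍ[ℝ]) :
    Commute (leftMulMatrix p) (rightMulMatrix q) := by
  ext i j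
  fin_cases i <;> fin_cases j <;>
    simp [leftMulMatrix, rightMulMatrix, mul_apply, Fin.sum_univ_four] <;> ring

lemma starMatrix_mul_leftMulMatrix (p : ℍ[ℝ]) :
    starMatrix * leftMulMatrix p = rightMulMatrix (star p) * starMatrix := by
  ext i j
  fin_cases i <;> fin_cases j <;>
    simp [leftMulMatrix, rightMulMatrix, starMatrix, mul_apply, Fin.sum_univ_four]

lemma starMatrix_mul_rightMulMatrix (q : ℍ[ℝ]) :
    starMatrix * rightMulMatrix q = leftMulMatrix (star q) * starMatrix := by
  ext i j
  fin_cases i <;> fin_cases j <;>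
    simp [leftMulMatrix, rightMulMatrix, starMatrix, mul_apply, Fin.sum_univ_four]

lemma starMatrix_mul_self : starMatrix * starMatrix = 1 := by
  rw [starMatrix, diagonal_mul_diagonal, ← diagonal_one]
  congr 1
  ext i
  fin_cases i <;> simp

lemma det_leftMulMatrix (p : ℍ[ℝ]) : (leftMulMatrix p).det = normSq p ^ 2 := by
  simp [leftMulMatrix, det_succ_row_zero, Fin.sum_univ_succ, Fin.succAbove, normSq_def']
  ring

lemma det_rightMulMatrix (q : ℍ[ℝ]) : (rightMulMatrix q).det = normSq q ^ 2 := by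
  simp [rightMulMatrix, det_succ_row_zero, Fin.sum_univ_succ, Fin.succAbove, normSq_def']
  ring

lemma det_starMatrix : starMatrix.det = -1 := by
  simp [starMatrix, Fin.prod_univ_four]

lemma leftRightMulMatrix_mul (p q p' q' : ℍ[ℝ]) :
    leftRightMulMatrix p q * leftRightMulMatrix p' q' = leftRightMulMatrix (p * p') (q' * q) := by
  rw [leftRightMulMatrix, leftRightMulMatrix, leftRightMulMatrix, leftMulMatrix_mul,
    rightMulMatrix_mul, (commute_leftMulMatrix_rightMulMatrix p' q).symm.mul_mul_mul_comm]

lemma starMatrix_mul_leftRightMulMatrix (p q : ℍ[ℝ]) :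
    starMatrix * leftRightMulMatrix p q = leftRightMulMatrix (star q) (star p) * starMatrix := by
  rw [leftRightMulMatrix, leftRightMulMatrix, ← mul_assoc, starMatrix_mul_leftMulMatrix, mul_assoc,
    starMatrix_mul_rightMulMatrix, ← mul_assoc, (commute_leftMulMatrix_rightMulMatrix _ _).eq]

-- `x ↦ |a|² x - 2 ⟨a, x⟩ a` equals `x ↦ -a x̄ a`.
lemma dotProduct_smul_one_sub_two_smul_vecMulVec (a : ℍ[ℝ]) :
    (equivTuple ℝ a ⬝ᵥ equivTuple ℝ a) • (1 : Matrix (Fin 4) (Fin 4) ℝ) -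
        (2 : ℝ) • vecMulVec (equivTuple ℝ a) (equivTuple ℝ a) =
      -(leftRightMulMatrix a a * starMatrix) := by
  ext i j
  rw [neg_apply, starMatrix, mul_diagonal]
  fin_cases i <;> fin_cases j <;>
    simp [leftRightMulMatrix, leftMulMatrix, rightMulMatrix, mul_apply, Fin.sum_univ_four,
      dotProduct, one_apply] <;> ring

def leftRightMulSubmonoid : Submonoid (Matrix (Fin 4) (Fin 4) ℝ) where
  carrier := {k | ∃ p q, k = leftRightMulMatrix p q ∨ k = leftRightMulMatrix p q * starMatrix}
  one_mem' :=
    ⟨1, 1, .inl (by rw [leftRightMulMatrix, leftMulMatrix_one, rightMulMatrix_one, one_mul])⟩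
  mul_mem' := by
    rintro _ _ ⟨p, q, rfl | rfl⟩ ⟨p', q', rfl | rfl⟩
    · exact ⟨p * p', q' * q, .inl (leftRightMulMatrix_mul p q p' q')⟩
    · exact ⟨p * p', q' * q, .inr (by rw [← mul_assoc, leftRightMulMatrix_mul])⟩
    · refine ⟨p * star q', star p' * q, .inr ?_⟩
      rw [mul_assoc, starMatrix_mul_leftRightMulMatrix, ← mul_assoc, leftRightMulMatrix_mul]
    · refine ⟨p * star q', star p' * q, .inl ?_⟩
      rw [mul_assoc, ← mul_assoc starMatrix, starMatrix_mul_leftRightMulMatrix, mul_assoc,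
        starMatrix_mul_self, mul_one, leftRightMulMatrix_mul]

lemma householder_mem_leftRightMulSubmonoid (v : Fin 4 → ℝ) :
    1 - (2 / (v ⬝ᵥ v)) • vecMulVec v v ∈ leftRightMulSubmonoid := by
  by_cases hv : v ⬝ᵥ v = 0
  · simp [hv]
  set a := (equivTuple ℝ).symm v
  have ha := dotProduct_smul_one_sub_two_smul_vecMulVec a
  simp only [a, Equiv.apply_symm_apply] at ha
  refine ⟨-(v ⬝ᵥ v)⁻¹ • a, a, .inr ?_⟩
  rw [leftRightMulMatrix, leftMulMatrix_smul, smul_mul_assoc, smul_mul_assoc, neg_smul,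
    ← smul_neg, ← leftRightMulMatrix, ← ha, smul_sub, smul_smul, inv_mul_cancel₀ hv, one_smul,
    smul_smul, inv_mul_eq_div]

theorem exists_eq_leftRightMulMatrix_of_mem_specialOrthogonalGroup
    {k : Matrix (Fin 4) (Fin 4) ℝ} (hk : k ∈ specialOrthogonalGroup (Fin 4) ℝ) :
    ∃ p q, k = leftRightMulMatrix p q := by
  rw [mem_specialOrthogonalGroup_iff] at hk
  obtain ⟨p, q, hpq | hpq⟩ :=
    orthogonalGroup_le_of_householder_mem _ householder_mem_leftRightMulSubmonoid hk.1
  · exact ⟨p, q, hpq⟩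
  · have hdet := hk.2
    rw [hpq, det_mul, leftRightMulMatrix, det_mul, det_leftMulMatrix, det_rightMulMatrix,
      det_starMatrix] at hdet
    nlinarith [sq_nonneg (normSq p * normSq q)]

lemma trace_transpose_leftRightMulMatrix_mul (p q p' q' : ℍ[ℝ]) :
    ((leftRightMulMatrix p q)ᵀ * leftRightMulMatrix p' q').trace =
      4 * ((equivTuple ℝ p ⬝ᵥ equivTuple ℝ p') * (equivTuple ℝ q ⬝ᵥ equivTuple ℝ q')) := by
  simp [leftRightMulMatrix, leftMulMatrix, rightMulMatrix, trace, mul_apply, Fin.sum_univ_four,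
    dotProduct]
  ring

/-- Coordinates in the basis `leftRightMulMatrix eᵢ eⱼ` (`eᵢ = 1, i, j, k`), which by
`trace_transpose_leftRightMulMatrix_mul` is orthogonal for the trace form, with squared
norms `4`. -/
noncomputable def leftRightCoords : Matrix (Fin 4) (Fin 4) ℝ →ₗ[ℝ] Matrix (Fin 4) (Fin 4) ℝ where
  toFun Z := of fun i j =>
    ((leftRightMulMatrix ((equivTuple ℝ).symm (Pi.single i 1))
      ((equivTuple ℝ).symm (Pi.single j 1)))ᵀ * Z).trace / 4
  map_add' Z Z' := by ext; simp [mul_add, add_div]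
  map_smul' c Z := by ext; simp [mul_div_assoc]

lemma leftRightCoords_leftRightMulMatrix (p q : ℍ[ℝ]) :
    leftRightCoords (leftRightMulMatrix p q) =
      vecMulVec (equivTuple ℝ p) (equivTuple ℝ q) := by
  ext i j
  simp only [leftRightCoords, LinearMap.coe_mk, AddHom.coe_mk, of_apply,
    trace_transpose_leftRightMulMatrix_mul, vecMulVec_apply, Equiv.apply_symm_apply,
    single_dotProduct, one_mul]
  ring

lemma leftRightCoords_diagonal :
    leftRightCoords (diagonal ![0, 1, 1, 1]) = diagonal ![3 / 4, 1 / 4, 1 / 4, 1 / 4] := by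
  ext i j
  simp only [leftRightCoords, LinearMap.coe_mk, AddHom.coe_mk, of_apply, trace, diag_apply,
    transpose_apply, leftRightMulMatrix, mul_apply, Fin.sum_univ_four]
  fin_cases i <;> fin_cases j <;> simp [leftMulMatrix, rightMulMatrix]
  norm_num

theorem det_leftRightCoords_smul_add_smul_add_smul_eq_zero {k₁ k₂ k₃ : Matrix (Fin 4) (Fin 4) ℝ}
    (h₁ : k₁ ∈ specialOrthogonalGroup (Fin 4) ℝ) (h₂ : k₂ ∈ specialOrthogonalGroup (Fin 4) ℝ)
    (h₃ : k₃ ∈ specialOrthogonalGroup (Fin 4) ℝ) (a b c : ℝ) :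
    (leftRightCoords (a • k₁ + b • k₂ + c • k₃)).det = 0 := by
  obtain ⟨p₁, q₁, rfl⟩ := exists_eq_leftRightMulMatrix_of_mem_specialOrthogonalGroup h₁
  obtain ⟨p₂, q₂, rfl⟩ := exists_eq_leftRightMulMatrix_of_mem_specialOrthogonalGroup h₂
  obtain ⟨p₃, q₃, rfl⟩ := exists_eq_leftRightMulMatrix_of_mem_specialOrthogonalGroup h₃
  have := det_sum_vecMulVec_eq_zero
    ![a • equivTuple ℝ p₁, b • equivTuple ℝ p₂, c • equivTuple ℝ p₃]
    ![equivTuple ℝ q₁, equivTuple ℝ q₂, equivTuple ℝ q₃] (by simp)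
  simpa only [Fin.sum_univ_three, cons_val, smul_vecMulVec, map_add, map_smul,
    leftRightCoords_leftRightMulMatrix] using this

end Quaternion

open Quaternion

theorem det_leftRightCoords_scalarBlockDiag_eq_zero {k₁ k₂ k₃ : Matrix (Fin 3) (Fin 3) ℝ}
    (h₁ : k₁ ∈ specialOrthogonalGroup (Fin 3) ℝ) (h₂ : k₂ ∈ specialOrthogonalGroup (Fin 3) ℝ)
    (h₃ : k₃ ∈ specialOrthogonalGroup (Fin 3) ℝ) (a b c : ℝ) :
    (leftRightCoords (scalarBlockDiag (a + b + c, a • k₁ + b • k₂ + c • k₃))).det = 0 := by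
  have hsum : scalarBlockDiag (a + b + c, a • k₁ + b • k₂ + c • k₃) =
      a • scalarBlockDiag (1, k₁) + b • scalarBlockDiag (1, k₂) + c • scalarBlockDiag (1, k₃) := by
    rw [← map_smul, ← map_smul, ← map_smul, ← map_add, ← map_add]
    simp
  rw [hsum]
  exact det_leftRightCoords_smul_add_smul_add_smul_eq_zero (scalarBlockDiag_one_mem h₁)
    (scalarBlockDiag_one_mem h₂) (scalarBlockDiag_one_mem h₃) a b c

theorem exceptional_triple_SUn_empty_interior_general
    (n : ℕ) (hn : n = 3 ∨ n = 4) (a b c : ℝ) :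
    interior {Z : Matrix (Fin n) (Fin n) ℝ |
        ∃ k₁ k₂ k₃ : Matrix (Fin n) (Fin n) ℝ,
          k₁ᵀ * k₁ = 1 ∧ k₁.det = 1 ∧ k₂ᵀ * k₂ = 1 ∧ k₂.det = 1 ∧
          k₃ᵀ * k₃ = 1 ∧ k₃.det = 1 ∧
          Z = a • k₁ + b • k₂ + c • k₃} = ∅ := by
  have hSO {m : ℕ} {k : Matrix (Fin m) (Fin m) ℝ} (h : kᵀ * k = 1) (hdet : k.det = 1) :
      k ∈ specialOrthogonalGroup (Fin m) ℝ :=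
    mem_specialOrthogonalGroup_iff.mpr ⟨(mem_orthogonalGroup_iff' _ _).mpr h, hdet⟩
  have hB : (leftRightCoords (scalarBlockDiag (0, 1))).det ≠ 0 := by
    rw [scalarBlockDiag_zero_one, leftRightCoords_diagonal, det_diagonal]
    simp [Fin.prod_univ_four]
  rcases hn with rfl | rfl
  · refine interior_eq_empty_of_det_eq_zero
      (fun Z => leftRightCoords (scalarBlockDiag (a + b + c, Z))) 1 _ hB (fun Z t => ?_) ?_
    · rw [show ((a + b + c, Z + t • 1) : ℝ × _) = (a + b + c, Z) + t • (0, 1) by simp, map_add,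
        map_smul, map_add, map_smul]
    · rintro _ ⟨k₁, k₂, k₃, h₁, d₁, h₂, d₂, h₃, d₃, rfl⟩
      exact det_leftRightCoords_scalarBlockDiag_eq_zero (hSO h₁ d₁) (hSO h₂ d₂) (hSO h₃ d₃) a b c
  · refine interior_eq_empty_of_det_eq_zero leftRightCoords (scalarBlockDiag (0, 1)) _ hB
      (fun Z t => by simp) ?_
    rintro _ ⟨k₁, k₂, k₃, h₁, d₁, h₂, d₂, h₃, d₃, rfl⟩
    exact det_leftRightCoords_smul_add_smul_add_smul_eq_zero (hSO h₁ d₁) (hSO h₂ d₂) (hSO h₃ d₃)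
      a b c

theorem exceptional_triple_SUn_empty_interior
    (n : ℕ) (hn : n = 3 ∨ n = 4) (a b c : ℝ) (ha : a ≠ 0) (hb : b ≠ 0) (hc : c ≠ 0) :
    interior {Z : Matrix (Fin n) (Fin n) ℝ |
        ∃ k₁ k₂ k₃ : Matrix (Fin n) (Fin n) ℝ,
          k₁ᵀ * k₁ = 1 ∧ k₁.det = 1 ∧ k₂ᵀ * k₂ = 1 ∧ k₂.det = 1 ∧
          k₃ᵀ * k₃ = 1 ∧ k₃.det = 1 ∧
          Z = a • k₁ + b • k₂ + c • k₃} = ∅ :=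
  exceptional_triple_SUn_empty_interior_general n hn a b c
end

section
/- Let a, b, c be nonzero real numbers. Then the set {a·k + b·h + c·w : k, h ∈ SO(4), w ∈ O(4) with det w = −1} has nonempty interior in M_4(ℝ). (This is the triple of elements all of type SU(4) in the symmetric space SO_0(4,4)/SO(4)×SO(4), restricted root system D_4, whose annihilating root systems are NOT all Weyl conjugate; such triples are absolutely continuous.) -/
/- STATEMENT 18: Let a, b, c be nonzero reals. Then
{a·k + b·h + c·w : k, h ∈ SO(4), w ∈ O(4), det w = −1} has nonempty interior in
M_4(ℝ). -/

open Matrix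

namespace St18

open Topology

abbrev Mat := Matrix (Fin 4) (Fin 4) ℝ

noncomputable def uu : Mat := !![3/5, -4/5, 0, 0; 4/5, 3/5, 0, 0; 0, 0, 5/13, -12/13; 0, 0, 12/13, 5/13]
noncomputable def vv : Mat := !![0, 0, 1, 0; 0, 0, 0, 1; 1, 0, 0, 0; 0, -1, 0, 0]
noncomputable def WX (M : Mat) : Mat :=
  !![0, (-3/8 : ℝ) * M 0 0 + (1/2 : ℝ) * M 0 1 + (-1/2 : ℝ) * M 1 0 + (-3/8 : ℝ) * M 1 1 + (-3/8 : ℝ) * M 2 2 + (-1/2 : ℝ) * M 2 3 + (-1/2 : ℝ) * M 3 2 + (3/8 : ℝ) * M 3 3, (1/2 : ℝ) * M 0 2 + (15/7 : ℝ) * M 0 3 + (13/7 : ℝ) * M 1 2 + (-1/2 : ℝ) * M 2 0 + (13/7 : ℝ) * M 2 1 + (15/7 : ℝ) * M 3 0, (-15/7 : ℝ) * M 0 2 + (1/2 : ℝ) * M 0 3 + (13/7 : ℝ) * M 1 3 + (-15/7 : ℝ) * M 2 0 + (-1/2 : ℝ) * M 3 0 + (13/7 : ℝ) * M 3 1;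
    (3/8 : ℝ) * M 0 0 + (-1/2 : ℝ) * M 0 1 + (1/2 : ℝ) * M 1 0 + (3/8 : ℝ) * M 1 1 + (3/8 : ℝ) * M 2 2 + (1/2 : ℝ) * M 2 3 + (1/2 : ℝ) * M 3 2 + (-3/8 : ℝ) * M 3 3, 0, (-13/7 : ℝ) * M 0 2 + (1/2 : ℝ) * M 1 2 + (15/7 : ℝ) * M 1 3 + (-13/7 : ℝ) * M 2 0 + (-1/2 : ℝ) * M 2 1 + (15/7 : ℝ) * M 3 1, (-13/7 : ℝ) * M 0 3 + (-15/7 : ℝ) * M 1 2 + (1/2 : ℝ) * M 1 3 + (-15/7 : ℝ) * M 2 1 + (-13/7 : ℝ) * M 3 0 + (-1/2 : ℝ) * M 3 1;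
    (-1/2 : ℝ) * M 0 2 + (-15/7 : ℝ) * M 0 3 + (-13/7 : ℝ) * M 1 2 + (1/2 : ℝ) * M 2 0 + (-13/7 : ℝ) * M 2 1 + (-15/7 : ℝ) * M 3 0, (13/7 : ℝ) * M 0 2 + (-1/2 : ℝ) * M 1 2 + (-15/7 : ℝ) * M 1 3 + (13/7 : ℝ) * M 2 0 + (1/2 : ℝ) * M 2 1 + (-15/7 : ℝ) * M 3 1, 0, (-5/24 : ℝ) * M 0 0 + (1/2 : ℝ) * M 0 1 + (1/2 : ℝ) * M 1 0 + (5/24 : ℝ) * M 1 1 + (-5/24 : ℝ) * M 2 2 + (1/2 : ℝ) * M 2 3 + (-1/2 : ℝ) * M 3 2 + (-5/24 : ℝ) * M 3 3;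
    (15/7 : ℝ) * M 0 2 + (-1/2 : ℝ) * M 0 3 + (-13/7 : ℝ) * M 1 3 + (15/7 : ℝ) * M 2 0 + (1/2 : ℝ) * M 3 0 + (-13/7 : ℝ) * M 3 1, (13/7 : ℝ) * M 0 3 + (15/7 : ℝ) * M 1 2 + (-1/2 : ℝ) * M 1 3 + (15/7 : ℝ) * M 2 1 + (13/7 : ℝ) * M 3 0 + (1/2 : ℝ) * M 3 1, (5/24 : ℝ) * M 0 0 + (-1/2 : ℝ) * M 0 1 + (-1/2 : ℝ) * M 1 0 + (-5/24 : ℝ) * M 1 1 + (5/24 : ℝ) * M 2 2 + (-1/2 : ℝ) * M 2 3 + (1/2 : ℝ) * M 3 2 + (5/24 : ℝ) * M 3 3, 0]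

noncomputable def WY (M : Mat) : Mat :=
  !![0, (5/8 : ℝ) * M 0 0 + (5/8 : ℝ) * M 1 1 + (5/8 : ℝ) * M 2 2 + (-5/8 : ℝ) * M 3 3, (25/14 : ℝ) * M 0 2 + (-9/7 : ℝ) * M 0 3 + (-5/7 : ℝ) * M 1 2 + (-12/7 : ℝ) * M 1 3 + (25/14 : ℝ) * M 2 0 + (-5/7 : ℝ) * M 2 1 + (-9/7 : ℝ) * M 3 0 + (-12/7 : ℝ) * M 3 1, (9/7 : ℝ) * M 0 2 + (25/14 : ℝ) * M 0 3 + (12/7 : ℝ) * M 1 2 + (-5/7 : ℝ) * M 1 3 + (9/7 : ℝ) * M 2 0 + (12/7 : ℝ) * M 2 1 + (25/14 : ℝ) * M 3 0 + (-5/7 : ℝ) * M 3 1;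
    (-5/8 : ℝ) * M 0 0 + (-5/8 : ℝ) * M 1 1 + (-5/8 : ℝ) * M 2 2 + (5/8 : ℝ) * M 3 3, 0, (5/7 : ℝ) * M 0 2 + (12/7 : ℝ) * M 0 3 + (25/14 : ℝ) * M 1 2 + (-9/7 : ℝ) * M 1 3 + (5/7 : ℝ) * M 2 0 + (25/14 : ℝ) * M 2 1 + (12/7 : ℝ) * M 3 0 + (-9/7 : ℝ) * M 3 1, (-12/7 : ℝ) * M 0 2 + (5/7 : ℝ) * M 0 3 + (9/7 : ℝ) * M 1 2 + (25/14 : ℝ) * M 1 3 + (-12/7 : ℝ) * M 2 0 + (9/7 : ℝ) * M 2 1 + (5/7 : ℝ) * M 3 0 + (25/14 : ℝ) * M 3 1;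
    (-25/14 : ℝ) * M 0 2 + (9/7 : ℝ) * M 0 3 + (5/7 : ℝ) * M 1 2 + (12/7 : ℝ) * M 1 3 + (-25/14 : ℝ) * M 2 0 + (5/7 : ℝ) * M 2 1 + (9/7 : ℝ) * M 3 0 + (12/7 : ℝ) * M 3 1, (-5/7 : ℝ) * M 0 2 + (-12/7 : ℝ) * M 0 3 + (-25/14 : ℝ) * M 1 2 + (9/7 : ℝ) * M 1 3 + (-5/7 : ℝ) * M 2 0 + (-25/14 : ℝ) * M 2 1 + (-12/7 : ℝ) * M 3 0 + (9/7 : ℝ) * M 3 1, 0, (13/24 : ℝ) * M 0 0 + (-13/24 : ℝ) * M 1 1 + (13/24 : ℝ) * M 2 2 + (13/24 : ℝ) * M 3 3;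
    (-9/7 : ℝ) * M 0 2 + (-25/14 : ℝ) * M 0 3 + (-12/7 : ℝ) * M 1 2 + (5/7 : ℝ) * M 1 3 + (-9/7 : ℝ) * M 2 0 + (-12/7 : ℝ) * M 2 1 + (-25/14 : ℝ) * M 3 0 + (5/7 : ℝ) * M 3 1, (12/7 : ℝ) * M 0 2 + (-5/7 : ℝ) * M 0 3 + (-9/7 : ℝ) * M 1 2 + (-25/14 : ℝ) * M 1 3 + (12/7 : ℝ) * M 2 0 + (-9/7 : ℝ) * M 2 1 + (-5/7 : ℝ) * M 3 0 + (-25/14 : ℝ) * M 3 1, (-13/24 : ℝ) * M 0 0 + (13/24 : ℝ) * M 1 1 + (-13/24 : ℝ) * M 2 2 + (-13/24 : ℝ) * M 3 3, 0]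

noncomputable def WZ (M : Mat) : Mat :=
  !![0, 0, (-1/2 : ℝ) * M 0 0 + (1/2 : ℝ) * M 1 1 + (1/2 : ℝ) * M 2 2 + (-1/2 : ℝ) * M 3 3, (-1/2 : ℝ) * M 0 1 + (-1/2 : ℝ) * M 1 0 + (1/2 : ℝ) * M 2 3 + (1/2 : ℝ) * M 3 2;
    0, 0, (-1/2 : ℝ) * M 0 1 + (-1/2 : ℝ) * M 1 0 + (-1/2 : ℝ) * M 2 3 + (-1/2 : ℝ) * M 3 2, (1/2 : ℝ) * M 0 0 + (-1/2 : ℝ) * M 1 1 + (1/2 : ℝ) * M 2 2 + (-1/2 : ℝ) * M 3 3;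
    (1/2 : ℝ) * M 0 0 + (-1/2 : ℝ) * M 1 1 + (-1/2 : ℝ) * M 2 2 + (1/2 : ℝ) * M 3 3, (1/2 : ℝ) * M 0 1 + (1/2 : ℝ) * M 1 0 + (1/2 : ℝ) * M 2 3 + (1/2 : ℝ) * M 3 2, 0, 0;
    (1/2 : ℝ) * M 0 1 + (1/2 : ℝ) * M 1 0 + (-1/2 : ℝ) * M 2 3 + (-1/2 : ℝ) * M 3 2, (-1/2 : ℝ) * M 0 0 + (1/2 : ℝ) * M 1 1 + (-1/2 : ℝ) * M 2 2 + (1/2 : ℝ) * M 3 3, 0, 0]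

lemma uu_t : uuᵀ = !![3/5, 4/5, 0, 0; -4/5, 3/5, 0, 0; 0, 0, 5/13, 12/13; 0, 0, -12/13, 5/13] := by
  ext i j; fin_cases i <;> fin_cases j <;> simp [uu, Matrix.vecHead, Matrix.vecTail]

lemma vv_t : vvᵀ = !![0, 0, 1, 0; 0, 0, 0, -1; 1, 0, 0, 0; 0, 1, 0, 0] := by
  ext i j; fin_cases i <;> fin_cases j <;> simp [vv, Matrix.vecHead, Matrix.vecTail]

lemma uu_orth : uuᵀ * uu = 1 := by
  rw [uu_t]
  ext i j
  fin_cases i <;> fin_cases j <;>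
    (simp [uu, Matrix.mul_apply, Fin.sum_univ_four, Matrix.one_apply, Matrix.vecHead,
      Matrix.vecTail]; try norm_num)

lemma uu_det : uu.det = 1 := by
  simp [uu, Matrix.det_succ_row_zero, Fin.sum_univ_succ, Fin.succAbove, Matrix.vecHead,
    Matrix.vecTail]
  try norm_num

lemma vv_orth : vvᵀ * vv = 1 := by
  rw [vv_t]
  ext i j
  fin_cases i <;> fin_cases j <;>
    (simp [vv, Matrix.mul_apply, Fin.sum_univ_four, Matrix.one_apply, Matrix.vecHead,
      Matrix.vecTail]; try norm_num)

lemma vv_det : vv.det = -1 := by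
  simp [vv, Matrix.det_succ_row_zero, Fin.sum_univ_succ, Fin.succAbove, Matrix.vecHead,
    Matrix.vecTail]
  try norm_num

set_option maxHeartbeats 2000000 in
lemma WX_skew (M : Mat) : (WX M)ᵀ = -(WX M) := by
  ext i j
  fin_cases i <;> fin_cases j <;>
    (simp [WX, Matrix.vecHead, Matrix.vecTail]; try ring)

set_option maxHeartbeats 2000000 in
lemma WY_skew (M : Mat) : (WY M)ᵀ = -(WY M) := by
  ext i j
  fin_cases i <;> fin_cases j <;>
    (simp [WY, Matrix.vecHead, Matrix.vecTail]; try ring)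

set_option maxHeartbeats 2000000 in
lemma WZ_skew (M : Mat) : (WZ M)ᵀ = -(WZ M) := by
  ext i j
  fin_cases i <;> fin_cases j <;>
    (simp [WZ, Matrix.vecHead, Matrix.vecTail]; try ring)

set_option maxHeartbeats 8000000 in
lemma span_identity (M : Mat) : WX M + uu * WY M + vv * WZ M = M := by
  ext i j
  fin_cases i <;> fin_cases j <;>
    (simp [WX, WY, WZ, uu, vv, Matrix.mul_apply, Fin.sum_univ_four, Matrix.vecHead,
      Matrix.vecTail, Matrix.add_apply]; ring)

lemma mul_orth {A B : Mat} (hA : Aᵀ * A = 1) (hB : Bᵀ * B = 1) : (A * B)ᵀ * (A * B) = 1 := by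
  rw [transpose_mul]
  calc Bᵀ * Aᵀ * (A * B) = Bᵀ * (Aᵀ * A) * B := by noncomm_ring
  _ = 1 := by rw [hA, mul_one, hB]

section Analysis

attribute [local instance] Matrix.linftyOpNormedRing Matrix.linftyOpNormedAlgebra

lemma cay_orth (X : Mat) (hX : Xᵀ = -X) (hU : IsUnit (1 + X)) :
    ((1 - X) * Ring.inverse (1 + X))ᵀ * ((1 - X) * Ring.inverse (1 + X)) = 1 := by
  have hdU : IsUnit (1 + X).det := (Matrix.isUnit_iff_isUnit_det _).1 hU
  have h1t : (1 + X)ᵀ = 1 - X := by rw [transpose_add, transpose_one, hX, ← sub_eq_add_neg]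
  have h2t : (1 - X)ᵀ = 1 + X := by rw [transpose_sub, transpose_one, hX, sub_neg_eq_add]
  have hdM : IsUnit (1 - X).det := by
    have : (1 - X).det = (1 + X).det := by rw [← h1t, Matrix.det_transpose]
    rw [this]; exact hdU
  rw [← Matrix.nonsing_inv_eq_ringInverse, transpose_mul, transpose_nonsing_inv, h1t, h2t]
  calc (1 - X)⁻¹ * (1 + X) * ((1 - X) * (1 + X)⁻¹)
      = (1 - X)⁻¹ * ((1 + X) * (1 - X)) * (1 + X)⁻¹ := by noncomm_ring
    _ = (1 - X)⁻¹ * ((1 - X) * (1 + X)) * (1 + X)⁻¹ := by noncomm_ring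
    _ = ((1 - X)⁻¹ * (1 - X)) * ((1 + X) * (1 + X)⁻¹) := by noncomm_ring
    _ = 1 := by rw [Matrix.nonsing_inv_mul _ hdM, Matrix.mul_nonsing_inv _ hdU, one_mul]

lemma cay_det (X : Mat) (hX : Xᵀ = -X) (hU : IsUnit (1 + X)) :
    ((1 - X) * Ring.inverse (1 + X)).det = 1 := by
  have hdU : IsUnit (1 + X).det := (Matrix.isUnit_iff_isUnit_det _).1 hU
  have h1t : (1 + X)ᵀ = 1 - X := by rw [transpose_add, transpose_one, hX, ← sub_eq_add_neg]
  have hdet : (1 - X).det = (1 + X).det := by rw [← h1t, Matrix.det_transpose]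
  rw [← Matrix.nonsing_inv_eq_ringInverse, Matrix.det_mul, Matrix.det_nonsing_inv, hdet]
  exact Ring.mul_inverse_cancel _ hdU


noncomputable def TT : Mat →L[ℝ] Mat :=
  LinearMap.toContinuousLinearMap
    ((Matrix.transposeLinearEquiv (Fin 4) (Fin 4) ℝ ℝ : Mat ≃ₗ[ℝ] Mat) : Mat →ₗ[ℝ] Mat)

lemma TT_apply (X : Mat) : TT X = Xᵀ := rfl

abbrev MM := Mat × Mat × Mat

noncomputable def P1 : MM →L[ℝ] Mat := ContinuousLinearMap.fst ℝ Mat (Mat × Mat)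
noncomputable def P2 : MM →L[ℝ] Mat :=
  (ContinuousLinearMap.fst ℝ Mat Mat).comp (ContinuousLinearMap.snd ℝ Mat (Mat × Mat))
noncomputable def P3 : MM →L[ℝ] Mat :=
  (ContinuousLinearMap.snd ℝ Mat Mat).comp (ContinuousLinearMap.snd ℝ Mat (Mat × Mat))

lemma block (S : MM →L[ℝ] Mat) :
    HasStrictFDerivAt (fun p : MM => (1 - S p) * Ring.inverse (1 + S p))
      ((show MM →L[ℝ] Mat from (1 - S 0) • ((-(ContinuousLinearMap.mulLeftRight ℝ Mat 1 1)).comp S)) +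
        (-S).smulRight (Ring.inverse (1 + S 0))) 0 := by
  have hA : HasStrictFDerivAt (fun p : MM => 1 - S p) (-S) 0 :=
    S.hasStrictFDerivAt.const_sub 1
  have hB : HasStrictFDerivAt (fun p : MM => Ring.inverse (1 + S p))
      ((-(ContinuousLinearMap.mulLeftRight ℝ Mat 1 1)).comp S) 0 := by
    have h0 : (1 : Mat) + S 0 = 1 := by simp
    have hinv : HasStrictFDerivAt Ring.inverse
        (-(ContinuousLinearMap.mulLeftRight ℝ Mat 1 1)) ((1 : Mat) + S 0) := by
      rw [h0]
      simpa using hasStrictFDerivAt_ringInverse (𝕜 := ℝ) (R := Mat) 1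
    exact hinv.comp 0 (S.hasStrictFDerivAt.const_add 1)
  exact hA.mul' hB

lemma scale_comb (t : ℝ) (N : Mat) (hN : Nᵀ = -N) :
    -(t • N - (t • N)ᵀ) + -(t • N - (t • N)ᵀ) = (-(4:ℝ)*t) • N := by
  rw [transpose_smul, hN, smul_neg, sub_neg_eq_add]; module

noncomputable def Q1 : MM →L[ℝ] Mat := P1 - TT.comp P1
noncomputable def Q2 : MM →L[ℝ] Mat := P2 - TT.comp P2
noncomputable def Q3 : MM →L[ℝ] Mat := P3 - TT.comp P3

lemma Q1_apply (p : MM) : Q1 p = p.1 - p.1ᵀ := rfl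
lemma Q2_apply (p : MM) : Q2 p = p.2.1 - p.2.1ᵀ := rfl
lemma Q3_apply (p : MM) : Q3 p = p.2.2 - p.2.2ᵀ := rfl

lemma aux (a b c : ℝ) (ha : a ≠ 0) (hb : b ≠ 0) (hc : c ≠ 0) :
    (interior {Z : Mat |
        ∃ k h w : Mat,
          kᵀ * k = 1 ∧ k.det = 1 ∧ hᵀ * h = 1 ∧ h.det = 1 ∧
          wᵀ * w = 1 ∧ w.det = -1 ∧
          Z = a • k + b • h + c • w}).Nonempty := by
  have hb1 := block Q1
  have hb2 := block Q2
  have hb3 := block Q3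
  have htot := ((hb1.const_smul a).add (((hb2.const_mul uu).const_smul b).add
    ((hb3.const_mul vv).const_smul c)))
  have hrange : LinearMap.range (ContinuousLinearMap.toLinearMap ((a • ((show MM →L[ℝ] Mat from (1 - Q1 0) • ((-(ContinuousLinearMap.mulLeftRight ℝ Mat 1 1)).comp Q1)) +
        (-Q1).smulRight (Ring.inverse (1 + Q1 0)))) +
      (b • (uu • ((show MM →L[ℝ] Mat from (1 - Q2 0) • ((-(ContinuousLinearMap.mulLeftRight ℝ Mat 1 1)).comp Q2)) +
        (-Q2).smulRight (Ring.inverse (1 + Q2 0)))) +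
       c • (vv • ((show MM →L[ℝ] Mat from (1 - Q3 0) • ((-(ContinuousLinearMap.mulLeftRight ℝ Mat 1 1)).comp Q3)) +
        (-Q3).smulRight (Ring.inverse (1 + Q3 0))))))) = ⊤ := by
    rw [LinearMap.range_eq_top]
    intro M
    refine ⟨((-1/(4*a)) • WX M, (-1/(4*b)) • WY M, (-1/(4*c)) • WZ M), ?_⟩
    change a • ((1 - Q1 0) * -(1 * Q1 _ * 1) + -Q1 _ * Ring.inverse (1 + Q1 0)) +
      (b • (uu * ((1 - Q2 0) * -(1 * Q2 _ * 1) + -Q2 _ * Ring.inverse (1 + Q2 0))) +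
       c • (vv * ((1 - Q3 0) * -(1 * Q3 _ * 1) + -Q3 _ * Ring.inverse (1 + Q3 0)))) = M
    simp only [ContinuousLinearMap.coe_coe, ContinuousLinearMap.add_apply,
      ContinuousLinearMap.smul_apply, ContinuousLinearMap.comp_apply,
      ContinuousLinearMap.smulRight_apply, ContinuousLinearMap.neg_apply,
      ContinuousLinearMap.mulLeftRight_apply, Q1_apply, Q2_apply, Q3_apply,
      ContinuousLinearMap.coe_fst', ContinuousLinearMap.coe_snd',
      Prod.fst_zero, Prod.snd_zero, map_zero, sub_zero, add_zero, Ring.inverse_one,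
      one_mul, mul_one, one_smul, smul_eq_mul, Matrix.transpose_zero, zero_sub, neg_zero]
    rw [scale_comb _ _ (WX_skew M), scale_comb _ _ (WY_skew M), scale_comb _ _ (WZ_skew M),
      mul_smul_comm, mul_smul_comm, smul_smul, smul_smul, smul_smul]
    have e1 : a * (-(4:ℝ) * (-1/(4*a))) = 1 := by field_simp
    have e2 : b * (-(4:ℝ) * (-1/(4*b))) = 1 := by field_simp
    have e3 : c * (-(4:ℝ) * (-1/(4*c))) = 1 := by field_simp
    rw [e1, e2, e3, one_smul, one_smul, one_smul, ← add_assoc]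
    exact span_identity M
  have hmap := htot.map_nhds_eq_of_surj hrange
  have skew_sub : ∀ X : Mat, (X - Xᵀ)ᵀ = -(X - Xᵀ) := fun X => by
    rw [transpose_sub, transpose_transpose, neg_sub]
  have hc1 : Continuous fun p : MM => (1 : Mat) + (p.1 - p.1ᵀ) := by
    exact continuous_const.add (Q1.continuous)
  have hc2 : Continuous fun p : MM => (1 : Mat) + (p.2.1 - p.2.1ᵀ) := by
    exact continuous_const.add (Q2.continuous)
  have hc3 : Continuous fun p : MM => (1 : Mat) + (p.2.2 - p.2.2ᵀ) := by
    exact continuous_const.add (Q3.continuous)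
  have hUopen : IsOpen {p : MM | IsUnit (1 + (p.1 - p.1ᵀ)) ∧ IsUnit (1 + (p.2.1 - p.2.1ᵀ)) ∧
      IsUnit (1 + (p.2.2 - p.2.2ᵀ))} :=
    (Units.isOpen.preimage hc1).and ((Units.isOpen.preimage hc2).and (Units.isOpen.preimage hc3))
  have hU0 : {p : MM | IsUnit (1 + (p.1 - p.1ᵀ)) ∧ IsUnit (1 + (p.2.1 - p.2.1ᵀ)) ∧
      IsUnit (1 + (p.2.2 - p.2.2ᵀ))} ∈ 𝓝 (0 : MM) := by
    refine hUopen.mem_nhds ?_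
    constructor
    · simpa using isUnit_one
    constructor
    · simpa using isUnit_one
    · simpa using isUnit_one
  refine ⟨_, mem_interior_iff_mem_nhds.2 (Filter.mem_of_superset
    (hmap ▸ Filter.image_mem_map hU0) ?_)⟩
  rintro _ ⟨p, ⟨h1, h2, h3⟩, rfl⟩
  exact ⟨(1 - (p.1 - p.1ᵀ)) * Ring.inverse (1 + (p.1 - p.1ᵀ)),
    uu * ((1 - (p.2.1 - p.2.1ᵀ)) * Ring.inverse (1 + (p.2.1 - p.2.1ᵀ))),
    vv * ((1 - (p.2.2 - p.2.2ᵀ)) * Ring.inverse (1 + (p.2.2 - p.2.2ᵀ))),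
    cay_orth _ (skew_sub p.1) h1, cay_det _ (skew_sub p.1) h1,
    mul_orth uu_orth (cay_orth _ (skew_sub p.2.1) h2),
    by rw [Matrix.det_mul, uu_det, cay_det _ (skew_sub p.2.1) h2, one_mul],
    mul_orth vv_orth (cay_orth _ (skew_sub p.2.2) h3),
    by rw [Matrix.det_mul, vv_det, cay_det _ (skew_sub p.2.2) h3, mul_one],
    (add_assoc _ _ _).symm⟩

end Analysis

end St18

theorem triple_SU4_not_Weyl_conjugate_nonempty_interior
    (a b c : ℝ) (ha : a ≠ 0) (hb : b ≠ 0) (hc : c ≠ 0) :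
    (interior {Z : Matrix (Fin 4) (Fin 4) ℝ |
        ∃ k h w : Matrix (Fin 4) (Fin 4) ℝ,
          kᵀ * k = 1 ∧ k.det = 1 ∧ hᵀ * h = 1 ∧ h.det = 1 ∧
          wᵀ * w = 1 ∧ w.det = -1 ∧
          Z = a • k + b • h + c • w}).Nonempty := by
  exact St18.aux a b c ha hb hc
end
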